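/- arXiv:2112.14629 — 9 statements merged into one kernel-verified Lean document; each statement's English description precedes it below -/
import Mathlib

section
/- Let X be a Polish space and assume that the continuum 𝔠 is a regular cardinal. Let (Y_α)_{α<𝔠} be a family of Polish spaces and (f_α)_{α<𝔠} a family of functions f_α : X → Y_α such that for every α < 𝔠: (1) f_α is surjective onto Y_α, and (2) for every y ∈ Y_α the fiber f_α⁻¹({y}) has cardinality strictly less than 𝔠. Then there exists a set A ⊆ X such that for every α < 𝔠 the image f_α[A] is a Bernstein set in Y_α. -/
/-- A perfect set: nonempty, closed, with no isolated points. -/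
def PerfectSet {X : Type*} [TopologicalSpace X] (P : Set X) : Prop :=
  Perfect P ∧ P.Nonempty

/-- A Bernstein set in a topological space: it meets, and its complement meets,
every perfect subset of the space. -/
def IsBernstein {X : Type*} [TopologicalSpace X] (A : Set X) : Prop :=
  ∀ P : Set X, PerfectSet P → (A ∩ P).Nonempty ∧ (P \ A).Nonempty

/-!
There are at most `𝔠` pairs `(α, P)` with `P` a perfect subset of `Y α`; well-order them so
that each pair has fewer than `𝔠` predecessors. At stage `(α, P)` pick a witness `y ∈ P`
outside the `f α`-image of the points chosen so far, and a point `x` with `f α x ∈ P` outside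
the fibres of all witnesses chosen so far (including `y`). A perfect set of a Polish space has
`𝔠` points and `f α` is onto, so `f α ⁻¹' P` has `𝔠` points, while by regularity of `𝔠` fewer
than `𝔠` fibres, each of size `< 𝔠`, cover fewer than `𝔠` points; so both choices are possible.
The chosen points `x` form the required set: `f α x ∈ P` and `y ∈ P` is never hit.
-/

open Cardinal Set

theorem WellFounded.exists_forall_fix_spec {α : Sort*} {β : α → Sort*} {r : α → α → Prop}
    (hr : WellFounded r) (p : ∀ a, (∀ b, r b a → β b) → β a → Prop)
    (h : ∀ a prev, ∃ x, p a prev x) : ∃ F : ∀ a, β a, ∀ a, p a (fun b _ => F b) (F a) := by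
  choose step hstep using h
  exact ⟨hr.fix step, fun a => hr.fix_eq step a ▸ hstep a _⟩

theorem Cardinal.exists_isWellOrder_mk_lt (S : Type*) :
    ∃ r : S → S → Prop, IsWellOrder S r ∧ ∀ s, #{t // r t s} < #S := by
  obtain ⟨r, _, hr⟩ := exists_ord_eq S
  exact ⟨r, inferInstance, fun s => Ordinal.card_typein (r := r) s ▸ card_typein_lt s hr⟩

theorem Cardinal.exists_mem_notMem_of_mk_lt {Z : Type*} {P B : Set Z} (h : #B < #P) :
    ∃ z ∈ P, z ∉ B := by
  by_contra! hPB
  exact (mk_le_mk_of_subset hPB).not_gt h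

theorem PerfectSet.continuum_le_mk {Z : Type*} [TopologicalSpace Z] [PolishSpace Z]
    {P : Set Z} (hP : PerfectSet P) : 𝔠 ≤ #P := by
  let := TopologicalSpace.upgradeIsCompletelyMetrizable Z
  obtain ⟨F, hFP, -, hF⟩ := hP.1.exists_nat_bool_injection hP.2
  simpa using lift_mk_le_lift_mk_of_injective (f := fun b => (⟨F b, hFP ⟨b, rfl⟩⟩ : P))
    fun a b hab => hF (congrArg Subtype.val hab)

theorem mk_setOf_isClosed_le_continuum (Z : Type*) [TopologicalSpace Z]
    [SecondCountableTopology Z] : #{s : Set Z | IsClosed s} ≤ 𝔠 := by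
  obtain ⟨b, hbc, -, hb⟩ := TopologicalSpace.exists_countable_basis Z
  let := borel Z
  have : BorelSpace Z := ⟨rfl⟩
  have hsub : {s : Set Z | IsClosed s} ⊆ {s | @MeasurableSet Z (.generateFrom b) s} :=
    fun s hs => hb.borel_eq_generateFrom ▸ hs.measurableSet
  exact (mk_le_mk_of_subset hsub).trans <| MeasurableSpace.cardinal_measurableSet_le_continuum <|
    hbc.le_aleph0.trans aleph0_le_continuum

section Bernstein

universe u

variable {X ι : Type u} {Y : ι → Type u} [∀ α, TopologicalSpace (Y α)]

abbrev IndexedPerfectSet (Y : ι → Type u) [∀ α, TopologicalSpace (Y α)] : Type u :=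
  Σ α, {P : Set (Y α) | PerfectSet P}

theorem mk_indexedPerfectSet_le [∀ α, SecondCountableTopology (Y α)] (hι : #ι ≤ 𝔠) :
    #(IndexedPerfectSet Y) ≤ 𝔠 :=
  calc #(IndexedPerfectSet Y) = sum fun α => #{P : Set (Y α) | PerfectSet P} := mk_sigma _
    _ ≤ sum fun _ : ι => 𝔠 := sum_le_sum _ _ fun _ =>
        (mk_le_mk_of_subset fun _ hP => hP.1.closed).trans (mk_setOf_isClosed_le_continuum _)
    _ = #ι * 𝔠 := sum_const' _ _
    _ ≤ 𝔠 := mul_le_of_le aleph0_le_continuum hι le_rfl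

variable {f : ∀ α, X → Y α}

variable (f) in
/-- The choice `(x, y)` at stage `s = (α, P)` given the earlier choices `prev`: `x` goes into
the set being built and `y ∈ P` is kept out of its `f α`-image. -/
def BernsteinStage {r : IndexedPerfectSet Y → IndexedPerfectSet Y → Prop}
    (s : IndexedPerfectSet Y) (prev : ∀ t, r t s → X × Y t.1) (xy : X × Y s.1) : Prop :=
  xy.2 ∈ s.2.1 ∧ (∀ t ht, f s.1 (prev t ht).1 ≠ xy.2) ∧
    f s.1 xy.1 ∈ s.2.1 ∧ f s.1 xy.1 ≠ xy.2 ∧ ∀ t ht, f t.1 xy.1 ≠ (prev t ht).2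

theorem isBernstein_image_range_of_bernsteinStage
    {r : IndexedPerfectSet Y → IndexedPerfectSet Y → Prop} [Std.Trichotomous r]
    {F : ∀ s : IndexedPerfectSet Y, X × Y s.1}
    (hF : ∀ s, BernsteinStage f s (fun t (_ : r t s) => F t) (F s)) (α : ι) :
    IsBernstein (f α '' range fun s => (F s).1) := by
  intro P hP
  obtain ⟨hyP, hprev, hxP, hxy, -⟩ := hF ⟨α, P, hP⟩
  refine ⟨⟨_, mem_image_of_mem _ (mem_range_self _), hxP⟩, _, hyP, ?_⟩
  rintro ⟨_, ⟨t, rfl⟩, hty⟩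
  rcases trichotomous_of r t ⟨α, P, hP⟩ with hlt | rfl | hgt
  · exact hprev t hlt hty
  · exact hxy hty
  · obtain ⟨-, -, -, -, hfibers⟩ := hF t
    exact hfibers _ hgt hty

variable [∀ α, PolishSpace (Y α)]

theorem exists_mem_preimage_forall_ne (hreg : (𝔠 : Cardinal.{u}).IsRegular) {α : ι}
    (hsurj : Function.Surjective (f α)) (hfiber : ∀ β (y : Y β), #(f β ⁻¹' {y}) < 𝔠)
    {P : Set (Y α)} (hP : PerfectSet P) {D : Set (Σ β, Y β)} (hD : #D < 𝔠) :
    ∃ x, f α x ∈ P ∧ ∀ d ∈ D, f d.1 x ≠ d.2 := by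
  have hfibers : #(⋃ d ∈ D, f d.1 ⁻¹' {d.2}) < 𝔠 :=
    (card_biUnion_lt_iff_forall_of_isRegular hreg hD).2 fun d _ => hfiber d.1 d.2
  have hpreimage : 𝔠 ≤ #(f α ⁻¹' P) :=
    calc 𝔠 ≤ #P := hP.continuum_le_mk
      _ = #(f α '' (f α ⁻¹' P)) := by rw [image_preimage_eq _ hsurj]
      _ ≤ #(f α ⁻¹' P) := mk_image_le
  obtain ⟨x, hxP, hx⟩ := exists_mem_notMem_of_mk_lt (hfibers.trans_le hpreimage)
  exact ⟨x, hxP, fun d hd hxd => hx (mem_biUnion hd hxd)⟩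

theorem exists_bernsteinStage (hreg : (𝔠 : Cardinal.{u}).IsRegular)
    (hsurj : ∀ α, Function.Surjective (f α))
    (hfiber : ∀ α (y : Y α), #(f α ⁻¹' {y}) < 𝔠)
    {r : IndexedPerfectSet Y → IndexedPerfectSet Y → Prop} {s : IndexedPerfectSet Y}
    (hs : #{t // r t s} < 𝔠) (prev : ∀ t, r t s → X × Y t.1) :
    ∃ xy, BernsteinStage f s prev xy := by
  have himage : #(f s.1 '' range fun t : {t // r t s} => (prev t t.2).1) < 𝔠 :=
    mk_image_le.trans_lt (mk_range_le.trans_lt hs)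
  obtain ⟨y, hyP, hy⟩ := exists_mem_notMem_of_mk_lt (himage.trans_le s.2.2.continuum_le_mk)
  let D : Set (Σ α, Y α) :=
    insert ⟨s.1, y⟩ (range fun t : {t // r t s} => ⟨t.1.1, (prev t t.2).2⟩)
  have hD : #D < 𝔠 := mk_insert_le.trans_lt <| add_lt_of_lt aleph0_le_continuum
    (mk_range_le.trans_lt hs) (one_lt_aleph0.trans aleph0_lt_continuum)
  obtain ⟨x, hxP, hx⟩ := exists_mem_preimage_forall_ne hreg (hsurj s.1) hfiber s.2.2 hD
  exact ⟨(x, y), hyP, fun t ht hty => hy ⟨_, ⟨⟨t, ht⟩, rfl⟩, hty⟩, hxP, hx _ (mem_insert _ _),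
    fun t ht => hx _ (mem_insert_of_mem _ ⟨⟨t, ht⟩, rfl⟩)⟩

end Bernstein

theorem stmt0_general {X : Type}
    (hreg : Cardinal.continuum.IsRegular)
    {ι : Type} (hι : Cardinal.mk ι = Cardinal.continuum)
    (Y : ι → Type) [∀ α, TopologicalSpace (Y α)] [∀ α, PolishSpace (Y α)]
    (f : ∀ α, X → Y α)
    (hsurj : ∀ α, Function.Surjective (f α))
    (hfiber : ∀ α (y : Y α), Cardinal.mk ↥(f α ⁻¹' {y}) < Cardinal.continuum) :
    ∃ A : Set X, ∀ α, IsBernstein ((f α) '' A) := by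
  have hreg₀ : (𝔠 : Cardinal.{0}).IsRegular := isRegular_lift_iff.mp (by rwa [lift_continuum])
  obtain ⟨r, hr, hsmall⟩ := exists_isWellOrder_mk_lt (IndexedPerfectSet Y)
  obtain ⟨F, hF⟩ := hr.wf.exists_forall_fix_spec (BernsteinStage f) fun s =>
    exists_bernsteinStage hreg₀ hsurj hfiber ((hsmall s).trans_le (mk_indexedPerfectSet_le hι.le))
  exact ⟨_, isBernstein_image_range_of_bernsteinStage hF⟩

theorem stmt0 {X : Type} [TopologicalSpace X] [PolishSpace X]
    (hreg : Cardinal.continuum.IsRegular)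
    {ι : Type} (hι : Cardinal.mk ι = Cardinal.continuum)
    (Y : ι → Type) [∀ α, TopologicalSpace (Y α)] [∀ α, PolishSpace (Y α)]
    (f : ∀ α, X → Y α)
    (hsurj : ∀ α, Function.Surjective (f α))
    (hfiber : ∀ α (y : Y α), Cardinal.mk ↥(f α ⁻¹' {y}) < Cardinal.continuum) :
    ∃ A : Set X, ∀ α, IsBernstein ((f α) '' A) :=
  stmt0_general hreg hι Y f hsurj hfiber
end

section
/- Let X ⊆ X₀ be Polish spaces and let (F, 𝕀) be a fine pair in X ⊆ X₀. Assume: (1) |F| ≤ sup{Cof(I_f) : f ∈ F}, and (2) sup{Cof(I_f) : f ∈ F} ≤ Cov(F, 𝕀). Then there exists a set A ⊆ X such that for every f ∈ F the image f[A] is completely I_f-nonmeasurable in f[X]. -/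
open Cardinal

/-- `B` is a Borel subset of the subspace `Y` of `X₀`: it is the trace on `Y`
of a Borel subset of `X₀`. -/
def BorelIn {X₀ : Type*} [MeasurableSpace X₀] (Y B : Set X₀) : Prop :=
  ∃ C : Set X₀, MeasurableSet C ∧ B = C ∩ Y

/-- `I` is a σ-ideal on the subspace `Y` of `X₀` containing all singletons of `Y`. -/
structure SigmaIdealOn {X₀ : Type*} (Y : Set X₀) (I : Set (Set X₀)) : Prop where
  subset_of_mem : ∀ A ∈ I, A ⊆ Y
  mem_of_subset : ∀ A ∈ I, ∀ B ⊆ A, B ∈ I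
  iUnion_mem : ∀ A : ℕ → Set X₀, (∀ n, A n ∈ I) → (⋃ n, A n) ∈ I
  singleton_mem : ∀ y ∈ Y, ({y} : Set X₀) ∈ I

/-- `I` (a σ-ideal on the subspace `Y`) has a Borel base: every member of `I`
is contained in a Borel (in `Y`) member of `I`. -/
def HasBorelBase {X₀ : Type*} [MeasurableSpace X₀] (Y : Set X₀) (I : Set (Set X₀)) : Prop :=
  ∀ A ∈ I, ∃ B ∈ I, BorelIn Y B ∧ A ⊆ B

/-- `A` is completely `I`-nonmeasurable in the subspace `Y`: every Borel (in `Y`)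
set not in `I` meets both `A` and its complement. -/
def CompletelyNonmeasurable {X₀ : Type*} [MeasurableSpace X₀]
    (Y : Set X₀) (I : Set (Set X₀)) (A : Set X₀) : Prop :=
  ∀ B : Set X₀, BorelIn Y B → B ∉ I → (A ∩ B).Nonempty ∧ (B \ A).Nonempty

/-- `Cof(I)`: the least cardinality of a family of Borel (in `Y`) sets not in `I`
such that every Borel (in `Y`) set not in `I` contains a member of the family. -/
noncomputable def Cof {X₀ : Type*} [MeasurableSpace X₀] (Y : Set X₀) (I : Set (Set X₀)) :
    Cardinal :=
  sInf { c | ∃ 𝓑 : Set (Set X₀), Cardinal.mk ↥𝓑 = c ∧ (∀ B ∈ 𝓑, BorelIn Y B ∧ B ∉ I) ∧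
    ∀ A : Set X₀, BorelIn Y A → A ∉ I → ∃ B ∈ 𝓑, B ⊆ A }

/-- The pair `(F, 𝕀)` is fine in `S ⊆ X₀`: for each `f ∈ F`, the image `f[S]`
is a Polish subspace of `X₀` and `𝕀 f` is a σ-ideal with Borel base on `f[S]`
containing all singletons. -/
def FinePair {X₀ : Type*} [TopologicalSpace X₀] [MeasurableSpace X₀] (S : Set X₀)
    (F : Set (↥S → X₀)) (𝕀 : (↥S → X₀) → Set (Set X₀)) : Prop :=
  ∀ f ∈ F, PolishSpace ↥(Set.range f) ∧ SigmaIdealOn (Set.range f) (𝕀 f) ∧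
    HasBorelBase (Set.range f) (𝕀 f)

/-- `Cov(F, 𝕀)`: the least cardinality of a set `Z ⊆ X₀` for which there are `f ∈ F`,
a Borel (in `f[S]`) set `B ∉ 𝕀 f` and `F₀ ⊆ F` with `|F₀| ≤ |Z|` such that
`f⁻¹[B] ⊆ ⋃_{h ∈ F₀} h⁻¹[Z]`. -/
noncomputable def CovPair {X₀ : Type*} [MeasurableSpace X₀] {S : Set X₀}
    (F : Set (↥S → X₀)) (𝕀 : (↥S → X₀) → Set (Set X₀)) : Cardinal :=
  sInf { c | ∃ Z : Set X₀, Cardinal.mk ↥Z = c ∧ ∃ f ∈ F, ∃ B : Set X₀,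
    BorelIn (Set.range f) B ∧ B ∉ 𝕀 f ∧
    ∃ F₀ ⊆ F, Cardinal.mk ↥F₀ ≤ Cardinal.mk ↥Z ∧ f ⁻¹' B ⊆ ⋃ h ∈ F₀, h ⁻¹' Z }

/-!
Enumerate all pairs `(f, B)` with `f ∈ F` and `B` in a cofinal family of Borel `I_f`-positive
sets of size `Cof(I_f)`; by (1) there are at most `sup Cof(I_f)` of them, hence by (2) at most
`Cov(F, 𝕀)`. Along a well-order of minimal type, pick `x_p, y_p ∈ f_p⁻¹[B_p]` with
`f_p(y_p) ≠ f_p(x_q)` for all `p, q`: at each stage fewer than `Cov(F, 𝕀)` values have to be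
avoided through fewer than `Cov(F, 𝕀)` functions, which is possible by the definition of
`Cov(F, 𝕀)`. Then `A = {x_p}` works. When `sup Cof(I_f)` is finite, every `Cof(I_f)` vanishes
and there is nothing to do.
-/

universe u

section SigmaIdeal

variable {X₀ : Type*} {Y : Set X₀} {I : Set (Set X₀)}

theorem SigmaIdealOn.union_mem (hI : SigmaIdealOn Y I) {A B : Set X₀} (hA : A ∈ I)
    (hB : B ∈ I) : A ∪ B ∈ I := by
  have hAB : A ∪ B ⊆ ⋃ n : ℕ, if n = 0 then A else B := by
    rintro x (hx | hx)
    · exact Set.mem_iUnion.2 ⟨0, by simpa using hx⟩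
    · exact Set.mem_iUnion.2 ⟨1, by simpa using hx⟩
  exact hI.mem_of_subset _ (hI.iUnion_mem _ fun n => by split <;> assumption) _ hAB

variable [MeasurableSpace X₀]

def IsCofinalFamily (Y : Set X₀) (I : Set (Set X₀)) (𝓑 : Set (Set X₀)) : Prop :=
  (∀ B ∈ 𝓑, BorelIn Y B ∧ B ∉ I) ∧ ∀ A : Set X₀, BorelIn Y A → A ∉ I → ∃ B ∈ 𝓑, B ⊆ A

theorem exists_isCofinalFamily_mk_eq_cof (Y : Set X₀) (I : Set (Set X₀)) :
    ∃ 𝓑, IsCofinalFamily Y I 𝓑 ∧ #𝓑 = Cof Y I := by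
  obtain ⟨𝓑, hcard, h𝓑⟩ :=
    csInf_mem (s := {c | ∃ 𝓑 : Set (Set X₀), #𝓑 = c ∧ IsCofinalFamily Y I 𝓑})
      ⟨_, {B | BorelIn Y B ∧ B ∉ I}, rfl, fun _ hB => hB,
        fun A hA hAI => ⟨A, ⟨hA, hAI⟩, subset_rfl⟩⟩
  exact ⟨𝓑, h𝓑, hcard⟩

theorem CompletelyNonmeasurable.of_isCofinalFamily {𝓑 : Set (Set X₀)} {A : Set X₀}
    (h𝓑 : IsCofinalFamily Y I 𝓑) (hA : ∀ B ∈ 𝓑, (A ∩ B).Nonempty ∧ (B \ A).Nonempty) :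
    CompletelyNonmeasurable Y I A := by
  intro B hB hBI
  obtain ⟨B₀, hB₀, hsub⟩ := h𝓑.2 B hB hBI
  obtain ⟨⟨a, haA, haB⟩, ⟨b, hbB, hbA⟩⟩ := hA B₀ hB₀
  exact ⟨⟨a, haA, hsub haB⟩, ⟨b, hsub hbB, hbA⟩⟩

theorem BorelIn.diff_singleton [MeasurableSingletonClass X₀] {B : Set X₀} (hB : BorelIn Y B)
    (b : X₀) : BorelIn Y (B \ {b}) := by
  obtain ⟨C, hC, rfl⟩ := hB
  exact ⟨C \ {b}, hC.diff (measurableSet_singleton b), Set.inter_sdiff_right_comm⟩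

/-- A finite cofinal family has a minimal member `B`; removing a point of `B` leaves a Borel set
outside the ideal, which would have to contain a strictly smaller member of the family. -/
theorem SigmaIdealOn.cof_eq_zero_of_lt_aleph0 [MeasurableSingletonClass X₀]
    (hI : SigmaIdealOn Y I) (hempty : ∅ ∈ I) (hlt : Cof Y I < ℵ₀) : Cof Y I = 0 := by
  by_contra hcof
  obtain ⟨𝓑, ⟨h𝓑, hcofinal⟩, hcard⟩ := exists_isCofinalFamily_mk_eq_cof Y I
  have hfin : 𝓑.Finite := lt_aleph0_iff_set_finite.1 (hcard ▸ hlt)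
  have hne : 𝓑.Nonempty := Set.nonempty_iff_ne_empty.2 fun h => hcof (by simp [← hcard, h])
  obtain ⟨B, hmin⟩ := hfin.exists_minimal hne
  obtain ⟨hBorel, hBI⟩ := h𝓑 B hmin.prop
  obtain ⟨b, hb⟩ : B.Nonempty := Set.nonempty_iff_ne_empty.2 fun h => hBI (h ▸ hempty)
  have hbY : b ∈ Y := by
    obtain ⟨C, -, rfl⟩ := hBorel
    exact hb.2
  have hdiff : B \ {b} ∉ I := fun h =>
    hBI (hI.mem_of_subset _ (hI.union_mem h (hI.singleton_mem b hbY)) B (by simp))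
  obtain ⟨B', hB', hsub⟩ := hcofinal _ (hBorel.diff_singleton b) hdiff
  exact (hsub (hmin.le_of_le hB' (hsub.trans Set.sdiff_subset) hb)).2 rfl

end SigmaIdeal

section CovPair

variable {X₀ : Type u} [MeasurableSpace X₀] {S : Set X₀} {F : Set (↥S → X₀)}
  {𝕀 : (↥S → X₀) → Set (Set X₀)} {f : ↥S → X₀} {B Z : Set X₀}

theorem covPair_le_of_subset_biUnion {F₀ : Set (↥S → X₀)} (hf : f ∈ F)
    (hB : BorelIn (Set.range f) B) (hBI : B ∉ 𝕀 f) (hF₀ : F₀ ⊆ F) (hcard : #F₀ ≤ #Z)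
    (hcover : f ⁻¹' B ⊆ ⋃ h ∈ F₀, h ⁻¹' Z) : CovPair F 𝕀 ≤ #Z :=
  csInf_le' ⟨Z, rfl, f, hf, B, hB, hBI, F₀, hF₀, hcard, hcover⟩

theorem covPair_eq_zero_of_empty_not_mem (hf : f ∈ F) (hempty : ∅ ∉ 𝕀 f) :
    CovPair F 𝕀 = 0 :=
  nonpos_iff_eq_zero.1 <| (covPair_le_of_subset_biUnion hf ⟨∅, .empty, by simp⟩ hempty
    (Set.empty_subset F) (by simp) (by simp)).trans_eq (mk_eq_zero ↥(∅ : Set X₀))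

theorem empty_mem_of_mk_le_covPair (hF : #F ≤ CovPair F 𝕀) (hf : f ∈ F) : ∅ ∈ 𝕀 f := by
  by_contra hempty
  rw [covPair_eq_zero_of_empty_not_mem hf hempty, nonpos_iff_eq_zero, mk_eq_zero_iff] at hF
  exact hF.false ⟨f, hf⟩

theorem covPair_le_mk : CovPair F 𝕀 ≤ #X₀ := by
  rcases Set.eq_empty_or_nonempty {c | ∃ Z : Set X₀, #Z = c ∧ ∃ f ∈ F, ∃ B : Set X₀,
      BorelIn (Set.range f) B ∧ B ∉ 𝕀 f ∧
      ∃ F₀ ⊆ F, #F₀ ≤ #Z ∧ f ⁻¹' B ⊆ ⋃ h ∈ F₀, h ⁻¹' Z} with h | ⟨c, hc⟩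
  · exact (congrArg sInf h).trans_le (sInf_empty.trans_le zero_le)
  · refine (csInf_le' hc).trans ?_
    obtain ⟨Z, rfl, -⟩ := hc
    exact mk_set_le Z

/-- Padding `Z` with `#Q` further points meets the condition `#F₀ ≤ #Z` in the definition of
`CovPair` without making `Z` too large. -/
theorem exists_mem_preimage_forall_apply_not_mem {ι : Type u} (hCov : ℵ₀ ≤ CovPair F 𝕀)
    (hf : f ∈ F) (hB : BorelIn (Set.range f) B) (hBI : B ∉ 𝕀 f) (g : ι → ↥S → X₀)
    (hg : ∀ i, g i ∈ F) {Q : Set ι} (hQ : #Q < CovPair F 𝕀) (hZ : #Z < CovPair F 𝕀) :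
    ∃ s ∈ f ⁻¹' B, ∀ i ∈ Q, g i s ∉ Z := by
  by_contra! hcover
  have hQ' : #(g '' Q) < CovPair F 𝕀 := mk_image_le.trans_lt hQ
  obtain ⟨W, hW⟩ := le_mk_iff_exists_set.1 (hQ'.le.trans covPair_le_mk)
  have hcover' : f ⁻¹' B ⊆ ⋃ h ∈ g '' Q, h ⁻¹' (Z ∪ W) := fun s hs => by
    obtain ⟨i, hi, hsZ⟩ := hcover s hs
    exact Set.mem_biUnion (Set.mem_image_of_mem g hi) (Or.inl hsZ)
  have hcard : #(g '' Q) ≤ #↥(Z ∪ W) := hW ▸ mk_le_mk_of_subset Set.subset_union_right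
  have hsmall : #↥(Z ∪ W) < CovPair F 𝕀 :=
    (mk_union_le Z W).trans_lt (add_lt_of_lt hCov hZ (hW ▸ hQ'))
  exact hsmall.not_ge <| covPair_le_of_subset_biUnion hf hB hBI
    (by rintro _ ⟨i, -, rfl⟩; exact hg i) hcard hcover'

end CovPair

theorem mk_sigma_le_of_forall_le {ι : Type u} {β : ι → Type u} {κ : Cardinal.{u}}
    (hκ : ℵ₀ ≤ κ) (hι : #ι ≤ κ) (hβ : ∀ i, #(β i) ≤ κ) : #(Σ i, β i) ≤ κ :=
  calc #(Σ i, β i) = sum fun i => #(β i) := mk_sigma _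
    _ ≤ sum fun _ : ι => κ := sum_le_sum _ _ hβ
    _ = #ι * κ := by simp
    _ ≤ κ * κ := mul_le_mul' hι le_rfl
    _ = κ := mul_eq_self hκ

/-- Transfinite recursion along a well-order of `P` of type `ord #P`: at stage `p`, `x p` avoids
the values `f q (y q)` for `q < p`, and `y p` avoids `f p (x q)` for `q ≤ p`. -/
theorem exists_separated_selectors {P S X : Type u} {κ : Cardinal.{u}} (hκ : ℵ₀ ≤ κ)
    (hP : #P ≤ κ) (f : P → S → X) (D : P → Set S)
    (havoid : ∀ p (Q : Set P) (Z : Set X), #Q < κ → #Z < κ → ∃ s ∈ D p, ∀ q ∈ Q, f q s ∉ Z) :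
    ∃ x y : P → S, (∀ p, x p ∈ D p ∧ y p ∈ D p) ∧ ∀ p q, f p (y p) ≠ f p (x q) := by
  obtain ⟨_, _, hord⟩ := exists_ord_eq_type_lt P
  have hwo : IsWellOrder P (· < ·) := isWellOrder_lt
  have hIio : ∀ p : P, #(Set.Iio p) < κ := fun p => by
    have hlt := Ordinal.typein_lt_type (· < ·) p
    rw [← hord, lt_ord, Ordinal.card_typein] at hlt
    exact hlt.trans_le hP
  have hone : (1 : Cardinal) < κ := one_lt_aleph0.trans_le hκ
  have step : ∀ p (prev : ∀ q < p, S × S), ∃ st : S × S, st.1 ∈ D p ∧ st.2 ∈ D p ∧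
      (∀ q (hq : q < p), f q st.1 ≠ f q (prev q hq).2) ∧ f p st.2 ≠ f p st.1 ∧
      ∀ q (hq : q < p), f p st.2 ≠ f p (prev q hq).1 := by
    intro p prev
    obtain ⟨s, hs, hsZ⟩ := havoid p (Set.Iio p)
      (Set.range fun q : Set.Iio p => f q (prev q q.2).2) (hIio p)
      (mk_range_le.trans_lt (hIio p))
    obtain ⟨t, ht, htZ⟩ := havoid p {p}
      (insert (f p s) (Set.range fun q : Set.Iio p => f p (prev q q.2).1)) (by simpa using hone)
      (mk_insert_le.trans_lt (add_lt_of_lt hκ (mk_range_le.trans_lt (hIio p)) hone))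
    exact ⟨(s, t), hs, ht, fun q hq heq => hsZ q hq ⟨⟨q, hq⟩, heq.symm⟩,
      fun heq => htZ p rfl (heq ▸ Set.mem_insert _ _),
      fun q hq heq => htZ p rfl (Or.inr ⟨⟨q, hq⟩, heq.symm⟩)⟩
  choose g hg using step
  let xy : P → S × S := WellFoundedLT.fix g
  have hspec : ∀ p, (xy p).1 ∈ D p ∧ (xy p).2 ∈ D p ∧ (∀ q < p, f q (xy p).1 ≠ f q (xy q).2) ∧
      f p (xy p).2 ≠ f p (xy p).1 ∧ ∀ q < p, f p (xy p).2 ≠ f p (xy q).1 := fun p => by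
    rw [show xy p = _ from WellFoundedLT.fix_eq g p]
    exact hg p _
  refine ⟨fun p => (xy p).1, fun p => (xy p).2, fun p => ⟨(hspec p).1, (hspec p).2.1⟩,
    fun p q => ?_⟩
  rcases lt_trichotomy q p with hqp | rfl | hpq
  · exact (hspec p).2.2.2.2 q hqp
  · exact (hspec q).2.2.2.1
  · exact ((hspec q).2.2.1 p hpq).symm

theorem stmt4_general {X₀ : Type} [TopologicalSpace X₀] [PolishSpace X₀]
    [MeasurableSpace X₀] [BorelSpace X₀]
    (S : Set X₀)
    (F : Set (↥S → X₀)) (𝕀 : (↥S → X₀) → Set (Set X₀))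
    (hfine : FinePair S F 𝕀)
    (h1 : Cardinal.mk ↥F ≤ ⨆ f : ↥F, Cof (Set.range (f : ↥S → X₀)) (𝕀 f))
    (h2 : (⨆ f : ↥F, Cof (Set.range (f : ↥S → X₀)) (𝕀 f)) ≤ CovPair F 𝕀) :
    ∃ A : Set ↥S, ∀ f ∈ F, CompletelyNonmeasurable (Set.range f) (𝕀 f) (f '' A) := by
  set κ := ⨆ f : ↥F, Cof (Set.range (f : ↥S → X₀)) (𝕀 f)
  have hcof_le (f : ↥F) : Cof (Set.range (f : ↥S → X₀)) (𝕀 f) ≤ κ :=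
    le_ciSup bddAbove_of_small f
  choose 𝓑 h𝓑 hcard using fun f : ↥F =>
    exists_isCofinalFamily_mk_eq_cof (Set.range (f : ↥S → X₀)) (𝕀 f)
  obtain ⟨x, y, hxy, hsep⟩ : ∃ x y : (Σ f : ↥F, ↥(𝓑 f)) → ↥S,
      (∀ p, x p ∈ (p.1 : ↥S → X₀) ⁻¹' p.2 ∧ y p ∈ (p.1 : ↥S → X₀) ⁻¹' p.2) ∧
      ∀ p q, (p.1 : ↥S → X₀) (y p) ≠ (p.1 : ↥S → X₀) (x q) := by
    by_cases hκ : ℵ₀ ≤ κ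
    · have hP := mk_sigma_le_of_forall_le hκ h1 fun f => (hcard f).trans_le (hcof_le f)
      exact exists_separated_selectors (hκ.trans h2) (hP.trans h2) _ _ fun p Q Z hQ hZ =>
        exists_mem_preimage_forall_apply_not_mem (hκ.trans h2) p.1.2 ((h𝓑 p.1).1 _ p.2.2).1
          ((h𝓑 p.1).1 _ p.2.2).2 (fun q => q.1) (fun q => q.1.2) hQ hZ
    · have : IsEmpty (Σ f : ↥F, ↥(𝓑 f)) := isEmpty_sigma.2 fun f => by
        rw [← mk_eq_zero_iff, hcard]
        exact (hfine f f.2).2.1.cof_eq_zero_of_lt_aleph0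
          (empty_mem_of_mk_le_covPair (h1.trans h2) f.2) ((hcof_le f).trans_lt (not_le.1 hκ))
      exact ⟨isEmptyElim, isEmptyElim, isEmptyElim, isEmptyElim⟩
  refine ⟨Set.range x, fun f hf =>
    CompletelyNonmeasurable.of_isCofinalFamily (h𝓑 ⟨f, hf⟩) fun B hB => ?_⟩
  let p : Σ f : ↥F, ↥(𝓑 f) := ⟨⟨f, hf⟩, ⟨B, hB⟩⟩
  exact ⟨⟨f (x p), ⟨x p, ⟨p, rfl⟩, rfl⟩, (hxy p).1⟩,
    ⟨f (y p), (hxy p).2, by rintro ⟨_, ⟨q, rfl⟩, h⟩; exact hsep p q h.symm⟩⟩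

theorem stmt4 {X₀ : Type} [TopologicalSpace X₀] [PolishSpace X₀]
    [MeasurableSpace X₀] [BorelSpace X₀]
    (S : Set X₀) [PolishSpace ↥S]
    (F : Set (↥S → X₀)) (𝕀 : (↥S → X₀) → Set (Set X₀))
    (hfine : FinePair S F 𝕀)
    (h1 : Cardinal.mk ↥F ≤ ⨆ f : ↥F, Cof (Set.range (f : ↥S → X₀)) (𝕀 f))
    (h2 : (⨆ f : ↥F, Cof (Set.range (f : ↥S → X₀)) (𝕀 f)) ≤ CovPair F 𝕀) :
    ∃ A : Set ↥S, ∀ f ∈ F, CompletelyNonmeasurable (Set.range f) (𝕀 f) (f '' A) :=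
  stmt4_general S F 𝕀 hfine h1 h2
end

section
/- There exists a set A contained in the unit circle S¹ = {(x,y) ∈ ℝ² : x² + y² = 1} such that for every angle α ∈ [0, π) the orthogonal projection π_α[A] = {x·cos α + y·sin α : (x,y) ∈ A} is a Bernstein set in the interval [-1, 1] = π_α[S¹]. -/
/-- `A` is a Bernstein set in the subspace `Y` (with the subspace topology). -/
def IsBernsteinIn {X : Type*} [TopologicalSpace X] (Y A : Set X) : Prop :=
  IsBernstein {y : Y | (y : X) ∈ A}

/-- The signed orthogonal projection onto the line through the origin in
direction `(cos α, sin α)`. -/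
noncomputable def proj (α : ℝ) (p : ℝ × ℝ) : ℝ :=
  p.1 * Real.cos α + p.2 * Real.sin α

/-!
Enumerate the continuum many pairs `(α, P)`, with `P ⊆ [-1, 1]` perfect, in order type `𝔠`, so
that every stage has fewer than `𝔠` predecessors. At the stage of `(α, P)` choose `s ∈ P` whose
fibre `S¹ ∩ proj α ⁻¹' {s}` (at most two points) misses all points chosen so far, and reserve this
fibre for ever; then add to `A` a point of `S¹` projecting into `P` and lying in no reserved fibre.
Both choices exist because fewer than `𝔠` points and finite fibres have been used, while `P` has
`𝔠` points. Then `proj α '' A` meets `P` and misses `s`.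
-/

open Set Cardinal Function

universe u

section TransfiniteConstruction

variable {X : Type u} {κ : Cardinal.{u}}

theorem exists_construction_step (hκ : ℵ₀ < κ) {D : Set X}
    {E : Set (Set X)} (hD : κ ≤ #D)
    (hE : ∀ S : Set X, #S < κ → ∃ F ∈ E, F.Countable ∧ Disjoint F S)
    {J : Type u} (hJ : #J < κ) (a : J → X) (B : J → Set X) (hB : ∀ j, (B j).Countable) :
    ∃ F ∈ E, F.Countable ∧ Disjoint F (range a) ∧ ∃ x ∈ D, x ∉ F ∧ ∀ j, x ∉ B j := by
  obtain ⟨F, hFE, hFc, hFa⟩ := hE (range a) (mk_range_le.trans_lt hJ)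
  have hBκ : #(⋃ j, B j) < κ := by
    refine (mk_iUnion_le B).trans_lt (mul_lt_of_lt hκ.le hJ ?_)
    exact (ciSup_le' fun j => (hB j).le_aleph0).trans_lt hκ
  have hFBκ : #(F ∪ ⋃ j, B j : Set X) < κ :=
    (mk_union_le _ _).trans_lt (add_lt_of_lt hκ.le (hFc.le_aleph0.trans_lt hκ) hBκ)
  obtain ⟨x, hxD, hxFB⟩ := sdiff_nonempty_of_mk_lt_mk (hFBκ.trans_le hD)
  simp only [mem_union, mem_iUnion, not_or, not_exists] at hxFB
  exact ⟨F, hFE, hFc, hFa, x, hxD, hxFB⟩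

theorem exists_meets_and_avoids_of_wellFoundedLT {ι : Type u} [LinearOrder ι] [WellFoundedLT ι]
    (hκ : ℵ₀ < κ) (hι : ∀ i : ι, #(Iio i) < κ) (D : ι → Set X) (E : ι → Set (Set X))
    (hD : ∀ i, κ ≤ #(D i))
    (hE : ∀ i (S : Set X), #S < κ → ∃ F ∈ E i, F.Countable ∧ Disjoint F S) :
    ∃ A : Set X, ∀ i, (A ∩ D i).Nonempty ∧ ∃ F ∈ E i, Disjoint F A := by
  choose F hFE hFc hFa x hxD hxF hxB using
    fun i (g : ∀ j < i, X × {F : Set X // F.Countable}) =>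
      exists_construction_step hκ (hD i) (hE i) (hι i)
        (fun j : Iio i => (g j j.2).1) (fun j => (g j j.2).2) (fun j => (g j j.2).2.2)
  -- stage `i` is a point of `A` and a set reserved outside `A`; its countability is kept in the
  -- type, so that later stages can bound the union of the reserved sets
  let f : ι → X × {F : Set X // F.Countable} :=
    WellFoundedLT.fix fun i g => (x i g, ⟨F i g, hFc i g⟩)
  have hf : ∀ i, f i = (x i fun j _ => f j, ⟨F i fun j _ => f j, hFc i _⟩) :=
    WellFoundedLT.fix_eq _
  refine ⟨range fun i => (f i).1, fun i => ⟨⟨(f i).1, mem_range_self i, ?_⟩, (f i).2, ?_, ?_⟩⟩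
  · rw [hf]; exact hxD i _
  · rw [hf]; exact hFE i _
  · rw [disjoint_right]
    rintro _ ⟨j, rfl⟩
    dsimp only
    rcases lt_trichotomy j i with hji | rfl | hij
    · rw [hf i]
      exact disjoint_right.1 (hFa i _) ⟨⟨j, hji⟩, rfl⟩
    · rw [hf j]; exact hxF j _
    · rw [hf j]; exact hxB j (fun k _ => f k) ⟨i, hij⟩

theorem exists_meets_and_avoids {T : Type u} (hκ : ℵ₀ < κ) (hT : #T ≤ κ) (D : T → Set X)
    (E : T → Set (Set X)) (hD : ∀ t, κ ≤ #(D t))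
    (hE : ∀ t (S : Set X), #S < κ → ∃ F ∈ E t, F.Countable ∧ Disjoint F S) :
    ∃ A : Set X, ∀ t, (A ∩ D t).Nonempty ∧ ∃ F ∈ E t, Disjoint F A := by
  rcases isEmpty_or_nonempty T with _ | _
  · exact ⟨∅, isEmptyElim⟩
  obtain ⟨e⟩ : Nonempty (T ↪ κ.ord.ToType) := by rwa [← le_def, mk_ord_toType]
  obtain ⟨A, hA⟩ := exists_meets_and_avoids_of_wellFoundedLT hκ
    (fun i => by simpa using mk_Iio_lt i) (D ∘ invFun e) (E ∘ invFun e) (fun _ => hD _)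
    (fun _ => hE _)
  refine ⟨A, fun t => ?_⟩
  simpa only [comp_apply, leftInverse_invFun e.injective t] using hA (e t)

end TransfiniteConstruction

theorem PerfectSet.continuum_le_mk_s6 {X : Type u} [MetricSpace X] [CompleteSpace X] {P : Set X}
    (hP : PerfectSet P) : 𝔠 ≤ #P := by
  obtain ⟨f, hfP, -, hf⟩ := hP.1.exists_nat_bool_injection hP.2
  simpa using lift_mk_le_lift_mk_of_injective (hf.codRestrict (range_subset_iff.1 hfP))

theorem mk_setOf_isOpen_le_continuum (X : Type u) [TopologicalSpace X]
    [SecondCountableTopology X] : #{U : Set X // IsOpen U} ≤ 𝔠 := by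
  obtain ⟨b, hbc, -, hb⟩ := TopologicalSpace.exists_countable_basis X
  let basicSubsets (U : {U : Set X // IsOpen U}) : 𝒫 b := ⟨{s ∈ b | s ⊆ U}, sep_subset _ _⟩
  have hinj : Injective basicSubsets := fun U V hUV => Subtype.ext <| by
    rw [hb.open_eq_sUnion' U.2, hb.open_eq_sUnion' V.2]
    exact congrArg (fun 𝒰 : 𝒫 b => ⋃₀ (𝒰 : Set (Set X))) hUV
  calc #{U : Set X // IsOpen U} ≤ #(𝒫 b) := mk_le_of_injective hinj
    _ = 2 ^ #b := mk_powerset b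
    _ ≤ 2 ^ ℵ₀ := power_le_power_left two_ne_zero hbc.le_aleph0
    _ = 𝔠 := two_power_aleph0

theorem mk_setOf_perfectSet_le_continuum (X : Type u) [TopologicalSpace X]
    [SecondCountableTopology X] : #{P : Set X // PerfectSet P} ≤ 𝔠 :=
  (mk_le_of_injective (f := fun P => (⟨P.1ᶜ, P.2.1.closed.isOpen_compl⟩ : {U : Set X // IsOpen U}))
    fun _ _ h => Subtype.ext (compl_injective (congrArg Subtype.val h))).trans
    (mk_setOf_isOpen_le_continuum X)

theorem exists_mem_disjoint_preimage_singleton {X Y : Type u} (f : X → Y) {Q : Set Y} {S : Set X}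
    (h : #S < #Q) : ∃ s ∈ Q, Disjoint (f ⁻¹' {s}) S := by
  obtain ⟨s, hsQ, hsS⟩ := sdiff_nonempty_of_mk_lt_mk (mk_image_le.trans_lt h)
  exact ⟨s, hsQ, disjoint_left.2 fun p hps hpS => hsS ⟨p, hpS, hps⟩⟩

theorem Set.SurjOn.mk_le_mk_inter_preimage {X Y : Type u} {f : X → Y} {s : Set X} {Q : Set Y}
    (hf : SurjOn f s Q) : #Q ≤ #(s ∩ f ⁻¹' Q : Set X) :=
  calc #Q ≤ #(f '' (s ∩ f ⁻¹' Q)) := mk_le_mk_of_subset <| by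
        rw [image_inter_preimage]; exact subset_inter hf subset_rfl
    _ ≤ #(s ∩ f ⁻¹' Q : Set X) := mk_image_le

def unitCircle : Set (ℝ × ℝ) := {p | p.1 ^ 2 + p.2 ^ 2 = 1}

theorem proj_cos_sin (α θ : ℝ) : proj α (Real.cos θ, Real.sin θ) = Real.cos (θ - α) := by
  rw [proj, Real.cos_sub]

theorem surjOn_proj_unitCircle (α : ℝ) : SurjOn (proj α) unitCircle (Icc (-1) 1) := by
  intro t ht
  refine ⟨(Real.cos (α + Real.arccos t), Real.sin (α + Real.arccos t)), ?_, ?_⟩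
  · simp only [unitCircle, mem_ofPred_eq, Real.cos_sq_add_sin_sq]
  · rw [proj_cos_sin, add_sub_cancel_left, Real.cos_arccos ht.1 ht.2]

theorem finite_unitCircle_inter_preimage_proj (α s : ℝ) :
    (unitCircle ∩ proj α ⁻¹' {s}).Finite := by
  set c := Real.cos α
  set d := Real.sin α
  have hcd : c ^ 2 + d ^ 2 = 1 := Real.cos_sq_add_sin_sq α
  -- in the frame rotated by `α` a point of the fibre is `(s, u)` with `u ^ 2 = 1 - s ^ 2`
  refine ((toFinite {√(1 - s ^ 2), -√(1 - s ^ 2)}).image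
    fun u => (s * c - u * d, s * d + u * c)).subset ?_
  rintro p ⟨hp, hps⟩
  simp only [unitCircle, mem_ofPred_eq, mem_preimage, proj, mem_singleton_iff] at hp hps
  set u := p.2 * c - p.1 * d
  have hu : u ^ 2 = 1 - s ^ 2 := by
    rw [← hps, ← hp]; linear_combination (p.1 ^ 2 + p.2 ^ 2) * hcd
  have hu' : u ^ 2 = √(1 - s ^ 2) ^ 2 := by
    rw [hu, Real.sq_sqrt (by rw [← hu]; positivity)]
  refine ⟨u, ?_, Prod.ext ?_ ?_⟩
  · exact sq_eq_sq_iff_eq_or_eq_neg.1 hu'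
  · dsimp only; rw [← hps]; linear_combination p.1 * hcd
  · dsimp only; rw [← hps]; linear_combination p.2 * hcd

theorem stmt6 :
    ∃ A : Set (ℝ × ℝ), A ⊆ {p : ℝ × ℝ | p.1 ^ 2 + p.2 ^ 2 = 1} ∧
      ∀ α ∈ Set.Ico (0 : ℝ) Real.pi,
        IsBernsteinIn (Set.Icc (-1 : ℝ) 1) (proj α '' A) := by
  let Q (P : {P : Set (Icc (-1 : ℝ) 1) // PerfectSet P}) : Set ℝ := Subtype.val '' P.1
  have hQ (P) : 𝔠 ≤ #(Q P) := by
    rw [mk_image_eq Subtype.val_injective]; exact P.2.continuum_le_mk_s6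
  have hT : #(ℝ × {P : Set (Icc (-1 : ℝ) 1) // PerfectSet P}) ≤ 𝔠 := by
    rw [mk_prod, lift_id, lift_id, mk_real]
    exact (mul_le_mul_right (mk_setOf_perfectSet_le_continuum _) 𝔠).trans_eq continuum_mul_self
  obtain ⟨A, hA⟩ := exists_meets_and_avoids aleph0_lt_continuum hT
    (fun t => unitCircle ∩ proj t.1 ⁻¹' Q t.2)
    (fun t => (fun s => unitCircle ∩ proj t.1 ⁻¹' {s}) '' Q t.2)
    (fun t => (hQ t.2).trans ((surjOn_proj_unitCircle t.1).mono subset_rfl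
      image_val_subset).mk_le_mk_inter_preimage)
    (fun t S hS => by
      obtain ⟨s, hs, hsS⟩ :=
        exists_mem_disjoint_preimage_singleton (proj t.1) (hS.trans_le (hQ t.2))
      exact ⟨_, mem_image_of_mem _ hs, (finite_unitCircle_inter_preimage_proj t.1 s).countable,
        hsS.mono_left inter_subset_right⟩)
  refine ⟨A ∩ unitCircle, inter_subset_right, fun α _ P hP => ?_⟩
  obtain ⟨⟨p, hpA, hpC, y, hyP, hyp⟩, _, ⟨_, ⟨z, hzP, rfl⟩, rfl⟩, hdisj⟩ := hA (α, ⟨P, hP⟩)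
  exact ⟨⟨y, ⟨p, ⟨hpA, hpC⟩, hyp.symm⟩, hyP⟩,
    ⟨z, hzP, fun ⟨q, ⟨hqA, hqC⟩, hqz⟩ => disjoint_left.1 hdisj ⟨hqC, hqz⟩ hqA⟩⟩
end

section
/- There exists a set A contained in the closed unit disc D = {(x,y) ∈ ℝ² : x² + y² ≤ 1} such that A is completely N-nonmeasurable in D (that is, for every Borel set B ⊆ D of positive two-dimensional Lebesgue measure, both A ∩ B and B \ A are nonempty) and, for every angle α ∈ [0, π), the projection π_α[A] = {x·cos α + y·sin α : (x,y) ∈ A} is completely N-nonmeasurable in [-1, 1] (that is, for every Borel set B ⊆ [-1,1] of positive one-dimensional Lebesgue measure, both π_α[A] ∩ B and B \ π_α[A] are nonempty). -/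
open MeasureTheory

/-- The closed unit disc in the plane. -/
def unitDisc : Set (ℝ × ℝ) := {p : ℝ × ℝ | p.1 ^ 2 + p.2 ^ 2 ≤ 1}

/-!
A transfinite construction of length `𝔠`. List as `(R_x)_{x < 𝔠}` all Borel sets `B ⊆ D` of
positive measure and all pairs `(α, B)` with `B ⊆ [-1, 1]` Borel of positive measure. At stage `x`
put a point `a_x` into `A` and keep out of `A` forever either a point `e ∈ B` (if `R_x = B`) or a
whole line `π_α = m` with `m ∈ B` (if `R_x = (α, B)`), where `a_x ∈ B`, resp. `a_x ∈ D` with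
`π_α a_x ∈ B`. Before stage `x` fewer than `𝔠` points and lines were banned, and these cannot
exhaust the target: a line that is not banned meets each banned line in at most one point, and
there are enough such lines carrying `𝔠` points of the target, namely (by Fubini) vertical lines
through a planar `B`, and chords `π_α = b` of `D` with `b ∈ B ∩ (-1, 1)`.
-/

open Cardinal Set Real

theorem exists_mem_notMem_of_mk_lt_mk {X : Type*} {S T : Set X} (h : #T < #S) :
    ∃ p ∈ S, p ∉ T := by
  by_contra! hST
  exact (mk_le_mk_of_subset hST).not_gt h

theorem mk_insert_lt_continuum {X : Type*} {T : Set X} (h : #T < 𝔠) (a : X) :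
    #(insert a T : Set X) < 𝔠 :=
  mk_insert_le.trans_lt (add_lt_of_lt aleph0_le_continuum h (nat_lt_continuum 1))

theorem mk_measurableSet_le_continuum (X : Type*) [MeasurableSpace X]
    [MeasurableSpace.CountablyGenerated X] : #{s : Set X // MeasurableSet s} ≤ 𝔠 := by
  obtain ⟨b, hb, hgen⟩ := MeasurableSpace.CountablyGenerated.isCountablyGenerated (α := X)
  have hb' : #b ≤ 𝔠 := (mk_le_aleph0_iff.2 hb.to_subtype).trans aleph0_le_continuum
  have := MeasurableSpace.cardinal_measurableSet_le_continuum hb'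
  rw [← hgen] at this
  exact this

theorem continuum_le_mk_of_measure_ne_zero {X : Type*} [MeasurableSpace X] [StandardBorelSpace X]
    {μ : Measure X} [NullSingletonClass μ] {S : Set X} (hS : MeasurableSet S) (hμS : μ S ≠ 0) :
    𝔠 ≤ #S := by
  have := hS.standardBorel
  have hS' : ¬ Countable S := fun h => hμS ((countable_coe_iff.1 h).measure_zero μ)
  simpa using lift_mk_le_lift_mk_of_injective
    (PolishSpace.measurableEquivNatBoolOfNotCountable hS').symm.injective

theorem exists_forall_of_recursive_choice {ι α : Type*} [LT ι] [WellFoundedLT ι]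
    {P : ∀ i : ι, (∀ j < i, α) → α → Prop} (h : ∀ i prev, ∃ a, P i prev a) :
    ∃ f : ι → α, ∀ i, P i (fun j _ => f j) (f i) :=
  ⟨wellFounded_lt.fix fun i prev => (h i prev).choose, fun i => by
    rw [WellFounded.fix_eq]
    exact (h _ _).choose_spec⟩

/-- The point at signed distance `t` along the line `proj α = b`. -/
noncomputable def chordPoint (α b t : ℝ) : ℝ × ℝ :=
  (b * cos α - t * sin α, b * sin α + t * cos α)

theorem proj_chordPoint (α β b t : ℝ) :
    proj β (chordPoint α b t) = b * cos (β - α) + t * sin (β - α) := by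
  simp only [proj, chordPoint, cos_sub, sin_sub]
  ring

theorem proj_chordPoint_self (α b t : ℝ) : proj α (chordPoint α b t) = b := by
  simp [proj_chordPoint]

theorem chordPoint_injective (α b : ℝ) : Function.Injective (chordPoint α b) := by
  intro s t hst
  simpa [proj_chordPoint] using congrArg (proj (α + π / 2)) hst

theorem chordPoint_mem_unitDisc {α b t : ℝ} (h : b ^ 2 + t ^ 2 ≤ 1) :
    chordPoint α b t ∈ unitDisc := by
  have hsq : (chordPoint α b t).1 ^ 2 + (chordPoint α b t).2 ^ 2 = b ^ 2 + t ^ 2 := by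
    simp only [chordPoint]
    linear_combination (b ^ 2 + t ^ 2) * sin_sq_add_cos_sq α
  change (chordPoint α b t).1 ^ 2 + (chordPoint α b t).2 ^ 2 ≤ 1
  rwa [hsq]

/-- The hypothesis `hb` says that no line of `L` parallel to the chord meets it; every other line
of `L` meets it in one point. -/
theorem exists_chordPoint_avoiding {α b : ℝ} {S : Set ℝ} (hS : 𝔠 ≤ #S) {E L : Set (ℝ × ℝ)}
    (hE : #E < 𝔠) (hL : #L < 𝔠) (hb : b ∉ (fun l => l.2 * cos (l.1 - α)) '' L) :
    ∃ t ∈ S, chordPoint α b t ∉ E ∧ ∀ l ∈ L, proj l.1 (chordPoint α b t) ≠ l.2 := by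
  let crossing (l : ℝ × ℝ) : ℝ := (l.2 - b * cos (l.1 - α)) / sin (l.1 - α)
  have hbad : #(chordPoint α b ⁻¹' E ∪ crossing '' L : Set ℝ) < 𝔠 :=
    (mk_union_le _ _).trans_lt <| add_lt_of_lt aleph0_le_continuum
      ((mk_preimage_of_injective _ _ (chordPoint_injective α b)).trans_lt hE)
      (mk_image_le.trans_lt hL)
  obtain ⟨t, htS, ht⟩ := exists_mem_notMem_of_mk_lt_mk (hbad.trans_le hS)
  refine ⟨t, htS, fun htE => ht (.inl htE), fun l hl hlt => ?_⟩
  rw [proj_chordPoint] at hlt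
  by_cases hs : sin (l.1 - α) = 0
  · have hc : cos (l.1 - α) ^ 2 = 1 := by
      linear_combination sin_sq_add_cos_sq (l.1 - α) - sin (l.1 - α) * hs
    refine hb ⟨l, hl, ?_⟩
    show l.2 * cos (l.1 - α) = b
    rw [← hlt, hs]
    linear_combination b * hc
  · refine ht (.inr ⟨l, hl, ?_⟩)
    rw [div_eq_iff hs]
    linarith

theorem exists_mem_avoiding_of_volume_ne_zero {B : Set (ℝ × ℝ)} (hB : MeasurableSet B)
    (hB0 : volume B ≠ 0) {E L : Set (ℝ × ℝ)} (hE : #E < 𝔠) (hL : #L < 𝔠) :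
    ∃ p ∈ B, p ∉ E ∧ ∀ l ∈ L, proj l.1 p ≠ l.2 := by
  let X := {x : ℝ | volume (Prod.mk x ⁻¹' B) ≠ 0}
  have hXm : MeasurableSet X :=
    (measurable_measure_prodMk_left hB) (measurableSet_singleton 0).compl
  have hX0 : volume X ≠ 0 := by
    rw [Measure.volume_eq_prod, Ne, Measure.measure_prod_null hB] at hB0
    simpa [Filter.EventuallyEq, ae_iff] using hB0
  obtain ⟨x, hxX, hx⟩ := exists_mem_notMem_of_mk_lt_mk
    ((mk_image_le.trans_lt hL).trans_le (continuum_le_mk_of_measure_ne_zero hXm hX0))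
  obtain ⟨t, htB, htE, htL⟩ := exists_chordPoint_avoiding (α := 0)
    (continuum_le_mk_of_measure_ne_zero (hB.preimage measurable_prodMk_left) hxX) hE hL hx
  have hxt : chordPoint 0 x t = (x, t) := by simp [chordPoint]
  rw [hxt] at htE htL
  exact ⟨(x, t), htB, htE, htL⟩

theorem exists_mem_unitDisc_proj_eq_avoiding {α b : ℝ} (hb1 : b ∈ Ioo (-1) 1)
    {E L : Set (ℝ × ℝ)} (hE : #E < 𝔠) (hL : #L < 𝔠)
    (hb : b ∉ (fun l => l.2 * cos (l.1 - α)) '' L) :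
    ∃ p ∈ unitDisc, proj α p = b ∧ p ∉ E ∧ ∀ l ∈ L, proj l.1 p ≠ l.2 := by
  have hb2 : 0 < 1 - b ^ 2 := by nlinarith [hb1.1, hb1.2]
  have hr : 0 < √(1 - b ^ 2) := sqrt_pos.2 hb2
  obtain ⟨t, ht, htE, htL⟩ := exists_chordPoint_avoiding (mk_Ioo_real (neg_lt_self hr)).ge hE hL hb
  have ht2 : t ^ 2 < 1 - b ^ 2 := by simpa [sq_sqrt hb2.le] using sq_lt_sq' ht.1 ht.2
  exact ⟨_, chordPoint_mem_unitDisc (by linarith), proj_chordPoint_self α b t, htE, htL⟩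

section Construction

abbrev DiscRequirement : Type :=
  {B : Set (ℝ × ℝ) // B ⊆ unitDisc ∧ MeasurableSet B ∧ 0 < volume B}

abbrev ProjRequirement : Type :=
  ℝ × {B : Set ℝ // B ⊆ Icc (-1) 1 ∧ MeasurableSet B ∧ 0 < volume B}

abbrev Requirement : Type := DiscRequirement ⊕ ProjRequirement

instance : Nonempty Requirement :=
  ⟨.inr (0, ⟨Icc (-1) 1, subset_rfl, measurableSet_Icc, by simp⟩)⟩

theorem mk_requirement_le_continuum : #Requirement ≤ 𝔠 := by
  have hD : #DiscRequirement ≤ 𝔠 :=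
    (mk_subtype_mono fun _ h => h.2.1).trans (mk_measurableSet_le_continuum _)
  have hB : #{B : Set ℝ // B ⊆ Icc (-1) 1 ∧ MeasurableSet B ∧ 0 < volume B} ≤ 𝔠 :=
    (mk_subtype_mono fun _ h => h.2.1).trans (mk_measurableSet_le_continuum _)
  simp only [Requirement, ProjRequirement, mk_sum, mk_prod, lift_id, mk_real]
  calc _ ≤ 𝔠 + 𝔠 * 𝔠 := by gcongr
    _ = 𝔠 := by simp

/-- `inl e` bans the point `e` from the constructed set, `inr (α, m)` the line `proj α = m`. -/
def banned : (ℝ × ℝ) ⊕ (ℝ × ℝ) → Set (ℝ × ℝ)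
  | .inl e => {e}
  | .inr l => proj l.1 ⁻¹' {l.2}

theorem forall_notMem_banned_iff {W : Set ((ℝ × ℝ) ⊕ (ℝ × ℝ))} {p : ℝ × ℝ} :
    (∀ w ∈ W, p ∉ banned w) ↔ p ∉ Sum.inl ⁻¹' W ∧ ∀ l ∈ Sum.inr ⁻¹' W, proj l.1 p ≠ l.2 := by
  simp only [Sum.forall, banned, mem_preimage, mem_singleton_iff]
  constructor
  · exact fun h => ⟨fun hp => h.1 p hp rfl, h.2⟩
  · exact fun h => ⟨fun e he hpe => h.1 (hpe ▸ he), h.2⟩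

structure Choice where
  point : ℝ × ℝ
  ban : (ℝ × ℝ) ⊕ (ℝ × ℝ)

def Choice.Satisfies : Requirement → Choice → Prop
  | .inl B, c => c.point ∈ B.1 ∧ ∃ e ∈ B.1, c.ban = .inl e
  | .inr (α, B), c => proj α c.point ∈ B.1 ∧ ∃ m ∈ B.1, c.ban = .inr (α, m)

/-- `P` are the points put into the set and `W` the bans made at earlier stages. -/
structure Choice.IsValid (P : Set (ℝ × ℝ)) (W : Set ((ℝ × ℝ) ⊕ (ℝ × ℝ))) (r : Requirement)
    (c : Choice) : Prop where
  mem_unitDisc : c.point ∈ unitDisc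
  point_notMem_banned : ∀ w ∈ W, c.point ∉ banned w
  notMem_banned_ban : ∀ p ∈ insert c.point P, p ∉ banned c.ban
  satisfies : c.Satisfies r

variable {P : Set (ℝ × ℝ)} {W : Set ((ℝ × ℝ) ⊕ (ℝ × ℝ))}

theorem exists_isValid_inl (hP : #P < 𝔠) (hW : #W < 𝔠) (B : DiscRequirement) :
    ∃ c : Choice, c.IsValid P W (.inl B) := by
  obtain ⟨B, hBD, hBm, hB0⟩ := B
  obtain ⟨a, haB, haW⟩ : ∃ a ∈ B, ∀ w ∈ W, a ∉ banned w := by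
    simpa only [forall_notMem_banned_iff] using exists_mem_avoiding_of_volume_ne_zero hBm hB0.ne'
      ((mk_preimage_of_injective _ _ Sum.inl_injective).trans_lt hW)
      ((mk_preimage_of_injective _ _ Sum.inr_injective).trans_lt hW)
  obtain ⟨e, heB, he⟩ := exists_mem_notMem_of_mk_lt_mk
    ((mk_insert_lt_continuum hP a).trans_le (continuum_le_mk_of_measure_ne_zero hBm hB0.ne'))
  exact ⟨⟨a, .inl e⟩, hBD haB, haW, fun p hp hpe => he (hpe ▸ hp), haB, e, heB, rfl⟩

theorem exists_isValid_inr (hP : #P < 𝔠) (hW : #W < 𝔠) (αB : ProjRequirement) :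
    ∃ c : Choice, c.IsValid P W (.inr αB) := by
  obtain ⟨α, B, hBI, hBm, hB0⟩ := αB
  have hE := (mk_preimage_of_injective _ _ Sum.inl_injective).trans_lt hW
  have hL := (mk_preimage_of_injective _ _ Sum.inr_injective).trans_lt hW
  have hBIoo : volume (B ∩ Ioo (-1) 1) ≠ 0 := by
    refine (hB0.trans_le ?_).ne'
    calc volume B = volume (B \ {-1, 1}) := (measure_sdiff_null ((toFinite _).measure_zero _)).symm
      _ ≤ volume (B ∩ Ioo (-1) 1) :=
        measure_mono fun x ⟨hxB, hx⟩ => ⟨hxB, by rw [← Icc_sdiff_both]; exact ⟨hBI hxB, hx⟩⟩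
  obtain ⟨b, ⟨hbB, hb1⟩, hb⟩ := exists_mem_notMem_of_mk_lt_mk ((mk_image_le.trans_lt hL).trans_le
    (continuum_le_mk_of_measure_ne_zero (hBm.inter measurableSet_Ioo) hBIoo))
  obtain ⟨a, haD, hab, haW⟩ : ∃ a ∈ unitDisc, proj α a = b ∧ ∀ w ∈ W, a ∉ banned w := by
    simpa only [forall_notMem_banned_iff] using exists_mem_unitDisc_proj_eq_avoiding hb1 hE hL hb
  obtain ⟨m, hmB, hm⟩ := exists_mem_notMem_of_mk_lt_mk (T := proj α '' insert a P)
    ((mk_image_le.trans_lt (mk_insert_lt_continuum hP a)).trans_le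
      (continuum_le_mk_of_measure_ne_zero hBm hB0.ne'))
  exact ⟨⟨a, .inr (α, m)⟩, haD, haW, fun p hp hpm => hm ⟨p, hp, hpm⟩, hab ▸ hbB, m, hmB, rfl⟩

theorem Choice.exists_isValid (hP : #P < 𝔠) (hW : #W < 𝔠) :
    ∀ r, ∃ c : Choice, c.IsValid P W r
  | .inl B => exists_isValid_inl hP hW B
  | .inr αB => exists_isValid_inr hP hW αB

end Construction

abbrev Stage : Type := (𝔠).ord.ToType

theorem exists_surjective_stage_requirement :
    ∃ g : Stage → Requirement, Function.Surjective g := by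
  have : #Requirement ≤ #Stage := by simpa using mk_requirement_le_continuum
  obtain ⟨f⟩ := this
  exact ⟨Function.invFun f, Function.invFun_surjective f.injective⟩

theorem exists_isValid_seq (g : Stage → Requirement) :
    ∃ c : Stage → Choice, ∀ x, (c x).IsValid (range fun y : Iio x => (c y).point)
      (range fun y : Iio x => (c y).ban) (g x) := by
  have hIio (x : Stage) : #(Iio x) < 𝔠 := by simpa using mk_Iio_lt x
  exact exists_forall_of_recursive_choice (P := fun x prev (c : Choice) => c.IsValid
    (range fun y : Iio x => (prev y y.2).point) (range fun y : Iio x => (prev y y.2).ban) (g x))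
    fun x _ => Choice.exists_isValid (mk_range_le.trans_lt (hIio x))
      (mk_range_le.trans_lt (hIio x)) (g x)

theorem point_notMem_banned_of_isValid {ι : Type*} [LinearOrder ι] {g : ι → Requirement}
    {c : ι → Choice} (hc : ∀ x, (c x).IsValid (range fun y : Iio x => (c y).point)
      (range fun y : Iio x => (c y).ban) (g x)) (x z : ι) :
    (c z).point ∉ banned (c x).ban := by
  rcases lt_trichotomy z x with h | rfl | h
  · exact (hc x).notMem_banned_ban _ (mem_insert_of_mem _ ⟨⟨z, h⟩, rfl⟩)
  · exact (hc z).notMem_banned_ban _ (mem_insert _ _)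
  · exact (hc z).point_notMem_banned _ ⟨⟨x, h⟩, rfl⟩

theorem stmt7 :
    ∃ A : Set (ℝ × ℝ), A ⊆ unitDisc ∧
      (∀ B : Set (ℝ × ℝ), B ⊆ unitDisc → MeasurableSet B → 0 < volume B →
        (A ∩ B).Nonempty ∧ (B \ A).Nonempty) ∧
      ∀ α ∈ Set.Ico (0 : ℝ) Real.pi,
        ∀ B : Set ℝ, B ⊆ Set.Icc (-1 : ℝ) 1 → MeasurableSet B → 0 < volume B →
          (proj α '' A ∩ B).Nonempty ∧ (B \ proj α '' A).Nonempty := by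
  obtain ⟨g, hg⟩ := exists_surjective_stage_requirement
  obtain ⟨c, hc⟩ := exists_isValid_seq g
  have hban := point_notMem_banned_of_isValid hc
  refine ⟨range fun x => (c x).point, range_subset_iff.2 fun x => (hc x).mem_unitDisc,
    fun B hBD hBm hB0 => ?_, fun α _ B hBI hBm hB0 => ?_⟩
  · obtain ⟨x, hx⟩ := hg (.inl ⟨B, hBD, hBm, hB0⟩)
    have hsat := (hc x).satisfies
    rw [hx] at hsat
    obtain ⟨hxB, e, heB, he⟩ := hsat
    refine ⟨⟨_, mem_range_self x, hxB⟩, e, heB, ?_⟩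
    rintro ⟨z, hz⟩
    exact hban x z (by rw [he]; exact hz)
  · obtain ⟨x, hx⟩ := hg (.inr (α, ⟨B, hBI, hBm, hB0⟩))
    have hsat := (hc x).satisfies
    rw [hx] at hsat
    obtain ⟨hxB, m, hmB, hm⟩ := hsat
    refine ⟨⟨_, mem_image_of_mem _ (mem_range_self x), hxB⟩, m, hmB, ?_⟩
    rintro ⟨_, ⟨z, rfl⟩, hz⟩
    exact hban x z (by rw [hm]; exact hz)
end

section
/- There exists a set A contained in the closed unit disc D = {(x,y) ∈ ℝ² : x² + y² ≤ 1} such that A is completely M-nonmeasurable in D (that is, for every nonmeager Borel set B ⊆ D, both A ∩ B and B \ A are nonempty) and, for every angle α ∈ [0, π), the projection π_α[A] = {x·cos α + y·sin α : (x,y) ∈ A} is completely M-nonmeasurable in [-1, 1] (that is, for every nonmeager Borel set B ⊆ [-1,1], both π_α[A] ∩ B and B \ π_α[A] are nonempty). -/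
/-- `B` is meager in the subspace `Y` (with the subspace topology). -/
def MeagerIn {X : Type*} [TopologicalSpace X] (Y B : Set X) : Prop :=
  IsMeagre {y : Y | (y : X) ∈ B}

/-!
Transfinite construction of length `𝔠`. Enumerate in type `𝔠` all requirements: the nonmeagre
Borel sets `B` of the plane, and the pairs `(α, B)` with `B ⊆ [-1, 1]` nonmeagre Borel. At each
stage fewer than `𝔠` points have been put into `A` and fewer than `𝔠` points and lines have been
forbidden. For `B` we put a point of `B` into `A` and forbid another one; for `(α, B)` we forbid
a line `proj α = s` with `s ∈ B` that misses `A` so far, and put into `A` a point of the disc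
with `proj α x ∈ B`. Such points exist: a nonmeagre Borel set is comeagre in an open set, so
by Kuratowski–Ulam it is comeagre on some open segment of a line that is not forbidden; that
line meets every forbidden point or line in at most one point, and a comeagre subset of an
interval has `𝔠` points (its sumset contains an interval).
-/

open Set Cardinal Real

universe u

theorem WellFoundedLT.exists_seq_of_forall_exists {I Y : Type*} [Preorder I] [WellFoundedLT I]
    (R : ∀ i : I, (Iio i → Y) → Y → Prop) (h : ∀ i prev, ∃ y, R i prev y) :
    ∃ F : I → Y, ∀ i, R i (fun k => F k) (F i) := by
  choose step hstep using h
  refine ⟨wellFounded_lt.fix fun i prev => step i fun k => prev k k.2, fun i => ?_⟩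
  rw [wellFounded_lt.fix_eq]
  exact hstep _ _

theorem exists_set_meets_and_avoids {X ι τ : Type u} (κ : Cardinal.{u}) (obstacle : ι → Set X)
    (pos : τ → Set X) (neg : τ → Set ι) (hτ : #τ ≤ κ)
    (h : ∀ t (P : Set X) (G : Set ι), #P < κ → #G < κ →
      ∃ x ∈ pos t, ∃ j ∈ neg t, Disjoint (obstacle j) P ∧ x ∉ obstacle j ∧
        ∀ g ∈ G, x ∉ obstacle g) :
    ∃ A : Set X, ∀ t, (A ∩ pos t).Nonempty ∧ ∃ j ∈ neg t, Disjoint (obstacle j) A := by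
  obtain hτ₀ | hτ₀ := isEmpty_or_nonempty τ
  · exact ⟨∅, isEmptyElim⟩
  obtain ⟨e⟩ : Nonempty (τ ↪ κ.ord.ToType) := by rwa [← Cardinal.le_def, mk_ord_toType]
  obtain ⟨task, htask⟩ : ∃ task : κ.ord.ToType → τ, task.Surjective :=
    ⟨_, Function.invFun_surjective e.injective⟩
  obtain ⟨F, hF⟩ := WellFoundedLT.exists_seq_of_forall_exists
    (fun i (prev : Iio i → X × ι) (c : X × ι) =>
      c.1 ∈ pos (task i) ∧ c.2 ∈ neg (task i) ∧
      Disjoint (obstacle c.2) (range fun k => (prev k).1) ∧ c.1 ∉ obstacle c.2 ∧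
      ∀ g ∈ range fun k => (prev k).2, c.1 ∉ obstacle g)
    fun i prev => by
      have hi : #(Iio i) < κ := by simpa using mk_Iio_lt i
      obtain ⟨x, hx, j, hj, hjP, hxj, hxG⟩ :=
        h (task i) _ _ (mk_range_le.trans_lt hi) (mk_range_le.trans_lt hi)
      exact ⟨(x, j), hx, hj, hjP, hxj, hxG⟩
  refine ⟨range fun i => (F i).1, fun t => ?_⟩
  obtain ⟨i, rfl⟩ := htask t
  obtain ⟨hx, hj, hjP, hxj, -⟩ := hF i
  refine ⟨⟨_, mem_range_self i, hx⟩, _, hj, disjoint_right.2 ?_⟩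
  rintro _ ⟨k, rfl⟩
  rcases lt_trichotomy k i with hk | rfl | hk
  · exact disjoint_right.1 hjP ⟨⟨k, hk⟩, rfl⟩
  · exact hxj
  · exact (hF k).2.2.2.2 _ ⟨⟨i, hk⟩, rfl⟩

theorem continuum_le_mk_Ioo_diff {a b : ℝ} (hab : a < b) {M : Set ℝ} (hM : IsMeagre M) :
    𝔠 ≤ #(Ioo a b \ M : Set ℝ) := by
  set S := Ioo a b \ M
  -- `S + S` contains an interval, so `#S * #S ≥ 𝔠`
  have hsum : Ioo (a + a) (b + b) ⊆ image2 (· + ·) S S := by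
    rintro x ⟨hax, hxb⟩
    have hI : ¬IsMeagre (Ioo (max a (x - b)) (min b (x - a))) :=
      not_isMeagre_of_isOpen isOpen_Ioo <| nonempty_Ioo.2 <| by
        simp only [max_lt_iff, lt_min_iff]; refine ⟨⟨?_, ?_⟩, ?_, ?_⟩ <;> linarith
    have hbad : IsMeagre (M ∪ (x - ·) ⁻¹' M) :=
      hM.union (hM.preimage_of_isOpenMap (by fun_prop) (Homeomorph.subLeft x).isOpenMap)
    obtain ⟨t, ⟨ht₁, ht₂⟩, htM⟩ := not_subset.1 fun hsub => hI (hbad.mono hsub)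
    simp only [max_lt_iff, lt_min_iff, mem_union, mem_preimage, not_or] at ht₁ ht₂ htM
    exact ⟨t, ⟨⟨ht₁.1, ht₂.1⟩, htM.1⟩, x - t, ⟨⟨by linarith, by linarith⟩, htM.2⟩, by ring⟩
  by_contra! hS
  have := (mk_Ioo_real (by linarith : a + a < b + b)).symm.trans_le
    ((mk_le_mk_of_subset hsum).trans mk_image2_le)
  exact (mul_lt_of_lt aleph0_le_continuum hS hS).not_ge this

theorem exists_mem_notMem_of_isOpen {U M S : Set ℝ} (hU : IsOpen U) (hne : U.Nonempty)
    (hM : IsMeagre M) (hS : #S < 𝔠) : ∃ t ∈ U, t ∉ M ∧ t ∉ S := by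
  obtain ⟨z, hz⟩ := hne
  obtain ⟨ε, hε, hball⟩ := Metric.isOpen_iff.1 hU z hz
  rw [Real.ball_eq_Ioo] at hball
  by_contra! h
  have hsub : Ioo (z - ε) (z + ε) \ M ⊆ S := fun t ht => h t (hball ht.1) ht.2
  exact ((continuum_le_mk_Ioo_diff (by linarith) hM).trans (mk_le_mk_of_subset hsub)).not_gt hS

theorem BaireMeasurableSet.exists_isOpen_nonempty_isMeagre_diff {X : Type*} [TopologicalSpace X]
    {B : Set X} (hB : BaireMeasurableSet B) (hnm : ¬IsMeagre B) :
    ∃ U, IsOpen U ∧ U.Nonempty ∧ IsMeagre (U \ B) := by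
  obtain ⟨U, hU, hBU⟩ := hB.residualEq_isOpen
  refine ⟨U, hU, nonempty_iff_ne_empty.2 ?_, ?_⟩
  · rintro rfl
    exact hnm <| by filter_upwards [hBU.mem_iff] with x hx using hx.1
  · filter_upwards [hBU.mem_iff] with x hx ⟨hxU, hxB⟩ using hxB (hx.2 hxU)

theorem exists_mem_notMem_of_not_isMeagre {B S : Set ℝ} (hB : MeasurableSet B)
    (hnm : ¬IsMeagre B) (hS : #S < 𝔠) : ∃ t ∈ B, t ∉ S := by
  obtain ⟨U, hU, hne, hUB⟩ := hB.baireMeasurableSet.exists_isOpen_nonempty_isMeagre_diff hnm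
  obtain ⟨t, htU, htB, htS⟩ := exists_mem_notMem_of_isOpen hU hne hUB hS
  exact ⟨t, by_contra fun h => htB ⟨htU, h⟩, htS⟩

section KuratowskiUlam

variable {X Y : Type*} [TopologicalSpace X] [TopologicalSpace Y] [SecondCountableTopology Y]

theorem IsClosed.isMeagre_setOf_nonempty_interior_preimage_prodMk {F : Set (X × Y)}
    (hF : IsClosed F) (hF' : IsNowhereDense F) :
    IsMeagre {x | (interior (Prod.mk x ⁻¹' F)).Nonempty} := by
  have hsub : {x | (interior (Prod.mk x ⁻¹' F)).Nonempty} ⊆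
      ⋃ V ∈ TopologicalSpace.countableBasis Y, {x | V ⊆ Prod.mk x ⁻¹' F} := by
    rintro x ⟨y, hy⟩
    obtain ⟨V, hV, -, hVF⟩ :=
      (TopologicalSpace.isBasis_countableBasis Y).exists_subset_of_mem_open hy isOpen_interior
    exact mem_biUnion hV (hVF.trans interior_subset)
  refine (isMeagre_biUnion (TopologicalSpace.countable_countableBasis Y)
    fun V hV => ?_).mono hsub
  have hcl : IsClosed {x | V ⊆ Prod.mk x ⁻¹' F} := by
    have hV : {x | V ⊆ Prod.mk x ⁻¹' F} = ⋂ y ∈ V, (·, y) ⁻¹' F := by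
      ext; simp [subset_def]
    exact hV ▸ isClosed_biInter fun y _ => hF.preimage (Continuous.prodMk_left y)
  refine IsNowhereDense.isMeagre <| hcl.isNowhereDense_iff.2 <| eq_empty_iff_forall_notMem.2 ?_
  intro x hx
  -- a nonempty open box inside `F` would contradict `interior F = ∅`
  have hbox : interior {x | V ⊆ Prod.mk x ⁻¹' F} ×ˢ V ⊆ interior F :=
    (isOpen_interior.prod (TopologicalSpace.isOpen_of_mem_countableBasis hV)
      ).subset_interior_iff.2 fun p hp => interior_subset hp.1 hp.2
  obtain ⟨y, hy⟩ := TopologicalSpace.nonempty_of_mem_countableBasis hV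
  simpa [hF.isNowhereDense_iff.1 hF'] using hbox (mk_mem_prod hx hy)

theorem IsMeagre.isMeagre_setOf_not_isMeagre_preimage_prodMk {M : Set (X × Y)}
    (hM : IsMeagre M) :
    IsMeagre {x | ¬IsMeagre (Prod.mk x ⁻¹' M)} := by
  obtain ⟨S, hS, hSc, hMS⟩ := isMeagre_iff_countable_union_isNowhereDense.1 hM
  have hbad (t) (ht : t ∈ S) := isClosed_closure.isMeagre_setOf_nonempty_interior_preimage_prodMk
    (hS t ht).closure
  refine (isMeagre_biUnion hSc hbad).mono fun x hx => ?_
  by_contra hgood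
  simp only [mem_iUnion₂, mem_ofPred_eq, not_exists, not_nonempty_iff_eq_empty] at hgood
  refine hx <| isMeagre_iff_countable_union_isNowhereDense.2
    ⟨(fun t => Prod.mk x ⁻¹' closure t) '' S, ?_, hSc.image _, fun y hy => ?_⟩
  · rintro _ ⟨t, ht, rfl⟩
    exact (isClosed_closure.preimage (Continuous.prodMk_right x)).isNowhereDense_iff.2
      (hgood t ht)
  · obtain ⟨t, ht, hyt⟩ := hMS hy
    exact ⟨_, mem_image_of_mem _ ht, subset_closure hyt⟩

end KuratowskiUlam

section Subspace

variable {X : Type*} [TopologicalSpace X] {D : Set X}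

theorem IsNowhereDense.preimage_val_of_subset_closure_interior (hD : D ⊆ closure (interior D))
    {s : Set X} (hs : IsNowhereDense s) : IsNowhereDense ((↑) ⁻¹' s : Set D) := by
  refine eq_empty_iff_forall_notMem.2 fun y hy => ?_
  obtain ⟨O, hOs, hO, hyO⟩ := mem_interior.1 hy
  obtain ⟨V, hV, rfl⟩ := isOpen_induced_iff.1 hO
  obtain ⟨z, hzV, hzD⟩ := mem_closure_iff.1 (hD y.2) V hV hyO
  have hVs : V ∩ interior D ⊆ closure s := fun w hw =>
    continuous_subtype_val.closure_preimage_subset s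
      (hOs (show (⟨w, interior_subset hw.2⟩ : D) ∈ _ from hw.1))
  have hz : z ∈ interior (closure s) :=
    mem_interior.2 ⟨_, hVs, hV.inter isOpen_interior, hzV, hzD⟩
  rwa [hs] at hz

theorem IsMeagre.meagerIn_of_subset_closure_interior (hD : D ⊆ closure (interior D)) {B : Set X}
    (hB : IsMeagre B) : MeagerIn D B := by
  obtain ⟨S, hS, hSc, hBS⟩ := isMeagre_iff_countable_union_isNowhereDense.1 hB
  refine isMeagre_iff_countable_union_isNowhereDense.2
    ⟨(fun t => ((↑) ⁻¹' t : Set D)) '' S, ?_, hSc.image _, fun y hy => ?_⟩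
  · rintro _ ⟨t, ht, rfl⟩
    exact (hS t ht).preimage_val_of_subset_closure_interior hD
  · obtain ⟨t, ht, hyt⟩ := hBS hy
    exact ⟨_, mem_image_of_mem _ ht, hyt⟩

end Subspace

theorem Convex.subset_closure_interior {E : Type*} [AddCommGroup E] [Module ℝ E]
    [TopologicalSpace E] [IsTopologicalAddGroup E] [ContinuousSMul ℝ E] {s : Set E}
    (hs : Convex ℝ s) (hint : (interior s).Nonempty) : s ⊆ closure (interior s) :=
  (hs.closure_interior_eq_closure_of_nonempty_interior hint).symm ▸ subset_closure

theorem convex_unitDisc : Convex ℝ unitDisc := by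
  intro p hp q hq a b ha hb hab
  simp only [unitDisc, mem_ofPred_eq] at hp hq
  show (a * p.1 + b * q.1) ^ 2 + (a * p.2 + b * q.2) ^ 2 ≤ 1
  nlinarith [mul_nonneg ha hb, sq_nonneg (p.1 - q.1), sq_nonneg (p.2 - q.2),
    mul_le_mul_of_nonneg_left hp ha, mul_le_mul_of_nonneg_left hq hb]

theorem unitDisc_subset_closure_interior : unitDisc ⊆ closure (interior unitDisc) := by
  exact convex_unitDisc.subset_closure_interior
    ⟨0, mem_interior.2 ⟨{p | p.1 ^ 2 + p.2 ^ 2 < 1},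
      fun p (hp : p.1 ^ 2 + p.2 ^ 2 < 1) => show p ∈ unitDisc from hp.le,
      isOpen_lt (by fun_prop) continuous_const, by norm_num⟩⟩

theorem Icc_subset_closure_interior : Icc (-1 : ℝ) 1 ⊆ closure (interior (Icc (-1) 1)) :=
  (convex_Icc _ _).subset_closure_interior (by simp)

theorem mk_setOf_measurableSet_le_continuum {X : Type u} [TopologicalSpace X]
    [SecondCountableTopology X] [MeasurableSpace X] [BorelSpace X] :
    #{s : Set X | MeasurableSet s} ≤ 𝔠 := by
  have h : ‹MeasurableSpace X› =
      MeasurableSpace.generateFrom (TopologicalSpace.countableBasis X) := by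
    rw [BorelSpace.measurable_eq (α := X),
      (TopologicalSpace.isBasis_countableBasis X).borel_eq_generateFrom]
  rw [h]
  exact MeasurableSpace.cardinal_measurableSet_le_continuum
    ((TopologicalSpace.countable_countableBasis X).le_aleph0.trans aleph0_le_continuum)

theorem mk_biUnion_le_of_subsingleton {ι α : Type u} {G : Set ι} {f : ι → Set α}
    (hf : ∀ g ∈ G, (f g).Subsingleton) : #(⋃ g ∈ G, f g) ≤ #G := by
  have hsup : ⨆ g : G, #(f g) ≤ 1 := ciSup_le' fun g => (hf g g.2).cardinalMk_le_one
  simpa using (mk_biUnion_le f G).trans (mul_le_mul' le_rfl hsup)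

/-- The point with coordinates `(t, u)` in the frame rotated by `α`; `u ↦ rotate α t u`
parametrizes the line `proj α ⁻¹' {t}`. -/
noncomputable def rotate (α t u : ℝ) : ℝ × ℝ := (t * cos α - u * sin α, t * sin α + u * cos α)

theorem proj_rotate (α β t u : ℝ) :
    proj β (rotate α t u) = t * cos (β - α) + u * sin (β - α) := by
  simp only [proj, rotate, cos_sub, sin_sub]
  ring

theorem proj_rotate_self (α t u : ℝ) : proj α (rotate α t u) = t := by
  simp [proj_rotate]

theorem rotate_injective (α t : ℝ) : Function.Injective (rotate α t) := fun u v huv => by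
  simpa [proj_rotate] using congrArg (proj (α + π / 2)) huv

theorem rotate_fst_sq_add_snd_sq (α t u : ℝ) :
    (rotate α t u).1 ^ 2 + (rotate α t u).2 ^ 2 = t ^ 2 + u ^ 2 := by
  simp only [rotate]
  linear_combination (t ^ 2 + u ^ 2) * sin_sq_add_cos_sq α

def obstacle : (ℝ × ℝ) ⊕ (ℝ × ℝ) → Set (ℝ × ℝ)
  | .inl p => {p}
  | .inr q => proj q.1 ⁻¹' {q.2}

theorem subsingleton_setOf_rotate_mem_obstacle {α t : ℝ} {g : (ℝ × ℝ) ⊕ (ℝ × ℝ)}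
    (h : ¬range (rotate α t) ⊆ obstacle g) : {u | rotate α t u ∈ obstacle g}.Subsingleton := by
  rcases g with p | ⟨β, s⟩
  · exact fun u hu v hv => rotate_injective α t (hu.trans hv.symm)
  · intro u (hu : proj β _ = s) v (hv : proj β _ = s)
    rw [proj_rotate] at hu hv
    by_cases hsin : sin (β - α) = 0
    · refine absurd ?_ h
      rintro _ ⟨w, rfl⟩
      show proj β _ = s
      rw [proj_rotate, hsin]
      simpa [hsin] using hu
    · exact mul_right_cancel₀ hsin (by linarith)

theorem subsingleton_setOf_range_rotate_subset_obstacle (α : ℝ) (g : (ℝ × ℝ) ⊕ (ℝ × ℝ)) :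
    {t | range (rotate α t) ⊆ obstacle g}.Subsingleton := by
  rcases g with p | ⟨β, s⟩
  · intro t ht
    have h01 : rotate α t 0 = rotate α t 1 :=
      (ht (mem_range_self 0)).trans (ht (mem_range_self 1)).symm
    exact absurd (rotate_injective α t h01) zero_ne_one
  · intro t ht t' ht'
    have hval : ∀ t, range (rotate α t) ⊆ obstacle (.inr (β, s)) → ∀ u,
        t * cos (β - α) + u * sin (β - α) = s := fun t ht u => by
      simpa [obstacle, proj_rotate] using ht (mem_range_self u)
    -- the line is parallel to `proj β ⁻¹' {s}`, so `cos (β - α) = ± 1`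
    have hsin : sin (β - α) = 0 := by linarith [hval t ht 0, hval t ht 1]
    have hcos : cos (β - α) ≠ 0 := fun hcos => by
      simpa [hsin, hcos] using sin_sq_add_cos_sq (β - α)
    exact mul_right_cancel₀ hcos (by linarith [hval t ht 0, hval t' ht' 0])

section

variable {G : Set ((ℝ × ℝ) ⊕ (ℝ × ℝ))}

theorem mk_biUnion_setOf_range_rotate_subset_obstacle_lt (α : ℝ) (hG : #G < 𝔠) :
    #(⋃ g ∈ G, {t | range (rotate α t) ⊆ obstacle g}) < 𝔠 :=
  (mk_biUnion_le_of_subsingleton fun g _ =>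
    subsingleton_setOf_range_rotate_subset_obstacle α g).trans_lt hG

theorem mk_biUnion_setOf_rotate_mem_obstacle_lt {α t : ℝ} (hG : #G < 𝔠)
    (hline : ∀ g ∈ G, ¬range (rotate α t) ⊆ obstacle g) :
    #(⋃ g ∈ G, {u | rotate α t u ∈ obstacle g}) < 𝔠 :=
  (mk_biUnion_le_of_subsingleton fun g hg =>
    subsingleton_setOf_rotate_mem_obstacle (hline g hg)).trans_lt hG

theorem exists_mem_avoiding_of_not_isMeagre {B : Set (ℝ × ℝ)} (hB : MeasurableSet B)
    (hnm : ¬IsMeagre B) (hG : #G < 𝔠) : ∃ x ∈ B, ∀ g ∈ G, x ∉ obstacle g := by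
  obtain ⟨U, hU, ⟨z, hz⟩, hUB⟩ :=
    hB.baireMeasurableSet.exists_isOpen_nonempty_isMeagre_diff hnm
  obtain ⟨V, W, hV, hW, hzV, hzW, hVW⟩ := isOpen_prod_iff.1 hU z.1 z.2 hz
  -- a vertical line through `V ×ˢ W` on which `U \ B` is meagre and which is not an obstacle
  obtain ⟨a, haV, ha, hline⟩ := exists_mem_notMem_of_isOpen hV ⟨_, hzV⟩
    hUB.isMeagre_setOf_not_isMeagre_preimage_prodMk
    (mk_biUnion_setOf_range_rotate_subset_obstacle_lt 0 hG)
  have hline' : ∀ g ∈ G, ¬range (rotate 0 a) ⊆ obstacle g := fun g hg h =>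
    hline (mem_biUnion hg h)
  obtain ⟨u, huW, hu, hbad⟩ := exists_mem_notMem_of_isOpen hW ⟨_, hzW⟩ (not_not.1 ha)
    (mk_biUnion_setOf_rotate_mem_obstacle_lt hG hline')
  have hau : rotate 0 a u = (a, u) := by simp [rotate]
  refine ⟨(a, u), by_contra fun h => hu ⟨hVW (mk_mem_prod haV huW), h⟩, fun g hg hx => ?_⟩
  exact hbad (mem_biUnion hg (show rotate 0 a u ∈ obstacle g from hau ▸ hx))

theorem exists_mem_unitDisc_proj_eq_avoiding_s8 {α t : ℝ} (ht : t ∈ Ioo (-1 : ℝ) 1) (hG : #G < 𝔠)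
    (hline : ∀ g ∈ G, ¬range (rotate α t) ⊆ obstacle g) :
    ∃ x ∈ unitDisc, proj α x = t ∧ ∀ g ∈ G, x ∉ obstacle g := by
  have ht2 : 0 < 1 - t ^ 2 := by nlinarith [ht.1, ht.2]
  obtain ⟨u, ⟨hu₁, hu₂⟩, -, hbad⟩ := exists_mem_notMem_of_isOpen isOpen_Ioo
    (nonempty_Ioo.2 (neg_lt_self (sqrt_pos.2 ht2))) IsMeagre.empty
    (mk_biUnion_setOf_rotate_mem_obstacle_lt hG hline)
  have hu : u ^ 2 < 1 - t ^ 2 := by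
    simpa [sq_sqrt ht2.le] using sq_lt_sq' hu₁ hu₂
  refine ⟨rotate α t u, ?_, proj_rotate_self α t u, fun g hg hx => hbad (mem_biUnion hg hx)⟩
  show (rotate α t u).1 ^ 2 + (rotate α t u).2 ^ 2 ≤ 1
  rw [rotate_fst_sq_add_snd_sq]
  linarith

abbrev PlaneTask : Type := {B : Set (ℝ × ℝ) // MeasurableSet B ∧ ¬IsMeagre B}

abbrev ChordTask : Type := ℝ × {B : Set ℝ // MeasurableSet B ∧ ¬IsMeagre B ∧ B ⊆ Icc (-1) 1}

/-- A task `t` is met by a point of `taskPos t` in the constructed set together with an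
obstacle in `taskNeg t` disjoint from it; for a chord task `(α, B)` that obstacle is a line
`proj α ⁻¹' {s}` with `s ∈ B`, which witnesses `s ∉ proj α '' A`. -/
def taskPos : PlaneTask ⊕ ChordTask → Set (ℝ × ℝ)
  | .inl B => B.1
  | .inr (α, B) => unitDisc ∩ proj α ⁻¹' B.1

def taskNeg : PlaneTask ⊕ ChordTask → Set ((ℝ × ℝ) ⊕ (ℝ × ℝ))
  | .inl B => .inl '' B.1
  | .inr (α, B) => (fun s => .inr (α, s)) '' B.1

theorem mk_task_le_continuum : #(PlaneTask ⊕ ChordTask) ≤ 𝔠 := by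
  have hB : ∀ {X : Type} [TopologicalSpace X] [SecondCountableTopology X] [MeasurableSpace X]
      [BorelSpace X] (p : Set X → Prop), #{B : Set X // MeasurableSet B ∧ p B} ≤ 𝔠 :=
    fun _ => (mk_subtype_mono fun _ h => h.1).trans mk_setOf_measurableSet_le_continuum
  rw [mk_sum, lift_id, lift_id, mk_prod, lift_id, lift_id, mk_real]
  calc _ ≤ 𝔠 + 𝔠 * 𝔠 := add_le_add (hB _) (mul_le_mul' le_rfl (hB _))
    _ = 𝔠 := by rw [continuum_mul_self, continuum_add_self]

theorem exists_witness_planeTask (B : PlaneTask) {P : Set (ℝ × ℝ)} (hP : #P < 𝔠)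
    (hG : #G < 𝔠) :
    ∃ x ∈ taskPos (.inl B), ∃ j ∈ taskNeg (.inl B), Disjoint (obstacle j) P ∧
      x ∉ obstacle j ∧ ∀ g ∈ G, x ∉ obstacle g := by
  obtain ⟨B, hB, hnm⟩ := B
  obtain ⟨y, hyB, hyP⟩ := exists_mem_avoiding_of_not_isMeagre hB hnm (G := .inl '' P)
    (mk_image_le.trans_lt hP)
  obtain ⟨x, hxB, hxG⟩ := exists_mem_avoiding_of_not_isMeagre hB hnm (G := insert (.inl y) G)
    (mk_insert_le.trans_lt (add_lt_of_lt aleph0_le_continuum hG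
      (one_lt_aleph0.trans_le aleph0_le_continuum)))
  refine ⟨x, hxB, _, mem_image_of_mem _ hyB, ?_, hxG _ (mem_insert _ _),
    fun g hg => hxG g (mem_insert_of_mem _ hg)⟩
  exact disjoint_singleton_left.2 fun hy => hyP _ (mem_image_of_mem _ hy) (mem_singleton y)

theorem exists_witness_chordTask (q : ChordTask) {P : Set (ℝ × ℝ)} (hP : #P < 𝔠)
    (hG : #G < 𝔠) :
    ∃ x ∈ taskPos (.inr q), ∃ j ∈ taskNeg (.inr q), Disjoint (obstacle j) P ∧
      x ∉ obstacle j ∧ ∀ g ∈ G, x ∉ obstacle g := by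
  obtain ⟨α, B, hB, hnm, hBI⟩ := q
  obtain ⟨s, hsB, hsP⟩ := exists_mem_notMem_of_not_isMeagre hB hnm (S := proj α '' P)
    (mk_image_le.trans_lt hP)
  obtain ⟨t, htB, htS⟩ := exists_mem_notMem_of_not_isMeagre hB hnm
    (S := {s, -1, 1} ∪ ⋃ g ∈ G, {t | range (rotate α t) ⊆ obstacle g})
    ((mk_union_le _ _).trans_lt (add_lt_of_lt aleph0_le_continuum
      ((lt_aleph0_of_finite _).trans_le aleph0_le_continuum)
      (mk_biUnion_setOf_range_rotate_subset_obstacle_lt α hG)))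
  simp only [mem_union, mem_insert_iff, mem_singleton_iff, not_or] at htS
  obtain ⟨⟨hts, htm, htp⟩, hline⟩ := htS
  have ht : t ∈ Ioo (-1 : ℝ) 1 := ⟨(hBI htB).1.lt_of_ne' htm, (hBI htB).2.lt_of_ne htp⟩
  obtain ⟨x, hxD, hxt, hxG⟩ := exists_mem_unitDisc_proj_eq_avoiding_s8 ht hG
    fun g hg h => hline (mem_biUnion hg h)
  refine ⟨x, ⟨hxD, show proj α x ∈ B from hxt ▸ htB⟩, _, mem_image_of_mem _ hsB,
    disjoint_left.2 fun p hp hpP => hsP ⟨p, hpP, hp⟩, fun hx => hts ?_, hxG⟩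
  exact hxt.symm.trans hx

end

theorem stmt8 :
    ∃ A : Set (ℝ × ℝ), A ⊆ unitDisc ∧
      (∀ B : Set (ℝ × ℝ), B ⊆ unitDisc → MeasurableSet B → ¬MeagerIn unitDisc B →
        (A ∩ B).Nonempty ∧ (B \ A).Nonempty) ∧
      ∀ α ∈ Set.Ico (0 : ℝ) Real.pi,
        ∀ B : Set ℝ, B ⊆ Set.Icc (-1 : ℝ) 1 → MeasurableSet B →
          ¬MeagerIn (Set.Icc (-1 : ℝ) 1) B →
          (proj α '' A ∩ B).Nonempty ∧ (B \ proj α '' A).Nonempty := by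
  obtain ⟨A, hA⟩ := exists_set_meets_and_avoids 𝔠 obstacle taskPos taskNeg mk_task_le_continuum
    fun t _ _ hP hG =>
      t.casesOn (exists_witness_planeTask · hP hG) (exists_witness_chordTask · hP hG)
  refine ⟨A ∩ unitDisc, inter_subset_right, fun B hBD hB hnm => ?_, fun α _ B hBI hB hnm => ?_⟩
  · have hnm' : ¬IsMeagre B := mt (·.meagerIn_of_subset_closure_interior
      unitDisc_subset_closure_interior) hnm
    obtain ⟨⟨x, hxA, hxB⟩, _, ⟨y, hyB, rfl⟩, hy⟩ := hA (.inl ⟨B, hB, hnm'⟩)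
    exact ⟨⟨x, ⟨hxA, hBD hxB⟩, hxB⟩, y, hyB, fun hyA => disjoint_left.1 hy rfl hyA.1⟩
  · have hnm' : ¬IsMeagre B := mt (·.meagerIn_of_subset_closure_interior
      Icc_subset_closure_interior) hnm
    obtain ⟨⟨x, hxA, hxD, hxB⟩, _, ⟨s, hsB, rfl⟩, hs⟩ := hA (.inr (α, ⟨B, hB, hnm', hBI⟩))
    refine ⟨⟨proj α x, ⟨x, ⟨hxA, hxD⟩, rfl⟩, hxB⟩, s, hsB, ?_⟩
    rintro ⟨p, hp, rfl⟩
    exact disjoint_left.1 hs rfl hp.1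
end

section
/- There exists a subset A of the closed unit disc D = {(x,y) ∈ ℝ² : x² + y² ≤ 1} such that the set of angles α ∈ [0, π) for which the projection π_α[A] = {x·cos α + y·sin α : (x,y) ∈ A} is not Lebesgue measurable and does not have the Baire property has cardinality 𝔠, and the set of angles α ∈ [0, π) for which π_α[A] is Lebesgue measurable and has the Baire property also has cardinality 𝔠. -/
/-!
Let `V ⊆ [1/2, 1]` be a Vitali set, i.e. a transversal of the cosets of `ℚ` in `ℝ`, and
`A = V × {0} ∪ {0} × [-1, 1]`. Then `π_α[A] = cos α • V ∪ [-sin α, sin α]`.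
For `π/4 < α < π/2` the segment swallows `cos α • V`, so the projection is an interval.
For `0 < α < 2/5` the part of the projection to the right of `sin α` is exactly `cos α • V`,
a transversal of the countable dense group `cos α • ℚ`. Countably many translates of such a
transversal `S` cover `ℝ`, so `S` is neither null nor meagre; if it were measurable, resp. had
the Baire property, then by the theorems of Steinhaus, resp. Pettis, `S - S` would be a
neighbourhood of `0` and would contain a nonzero element of the group, which is impossible.
-/

open MeasureTheory

/-- `S` has the Baire property: it differs from some open set by a meager set. -/
def HasBaireProperty {X : Type*} [TopologicalSpace X] (S : Set X) : Prop :=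
  ∃ U : Set X, IsOpen U ∧ IsMeagre (symmDiff S U)

/-- `S` is Lebesgue measurable, i.e. measurable with respect to the completed
Lebesgue measure. -/
def LebesgueMeasurable (S : Set ℝ) : Prop :=
  NullMeasurableSet S volume

open Set Filter Topology Pointwise

theorem hasBaireProperty_iff_baireMeasurableSet {X : Type*} [TopologicalSpace X] {S : Set X} :
    HasBaireProperty S ↔ BaireMeasurableSet S := by
  have (U : Set X) : IsMeagre (symmDiff S U) ↔ S =ᵇ U := by
    have hc : (symmDiff S U)ᶜ = {x | x ∈ S ↔ x ∈ U} := by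
      ext x
      by_cases hS : x ∈ S <;> by_cases hU : x ∈ U <;> simp [hS, hU]
    rw [IsMeagre, hc, eventuallyEq_set]
    rfl
  simp only [HasBaireProperty, BaireMeasurableSet.iff_residualEq_isOpen, this]

theorem AddSubgroup.exists_isComplement_subset {G : Type*} [AddGroup G] (H : AddSubgroup G)
    {U : Set G} (hU : ∀ x, ∃ g ∈ H, x + g ∈ U) : ∃ S ⊆ U, IsComplement S H := by
  have (q : G ⧸ H) : ∃ y ∈ U, (y : G ⧸ H) = q := by
    obtain ⟨x, rfl⟩ := QuotientAddGroup.mk_surjective q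
    obtain ⟨g, hg, hxg⟩ := hU x
    exact ⟨x + g, hxg, QuotientAddGroup.eq.mpr (by simpa using H.neg_mem hg)⟩
  choose f hfU hf using this
  exact ⟨range f, range_subset_iff.mpr hfU, isComplement_range_left hf⟩

theorem BaireMeasurableSet.sub_self_mem_nhds_zero {G : Type*} [TopologicalSpace G] [AddGroup G]
    [IsTopologicalAddGroup G] [BaireSpace G] {S : Set G} (hS : BaireMeasurableSet S)
    (hS' : ¬IsMeagre S) : S - S ∈ 𝓝 0 := by
  obtain ⟨U, hU, hSU⟩ := hS.residualEq_isOpen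
  obtain ⟨x, hx⟩ : U.Nonempty := by
    refine nonempty_iff_ne_empty.mpr fun hU₀ ↦ hS' ?_
    exact (by simpa [hU₀, eventuallyEq_set] using hSU : ∀ᵇ y, y ∉ S)
  have hcont : Continuous fun y : G ↦ -y + x := continuous_neg.add continuous_const
  -- for `g` with `x ∈ g + U`, the open set `U ∩ (g + U)` is not meagre, so it contains a point
  -- `y` at which both `S` and `g + S` agree with `U` and `g + U`
  filter_upwards [(hU.preimage hcont).mem_nhds (by simpa using hx)] with g hg
  have hshift : (fun y ↦ -g + y) ⁻¹' S =ᵇ (fun y ↦ -g + y) ⁻¹' U :=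
    hSU.filter_mono (tendsto_residual_of_isOpenMap (continuous_const_add (-g))
      (isOpenMap_add_left (-g)))
  have hV : ∃ᵇ y, y ∈ U ∩ (fun y ↦ -g + y) ⁻¹' U :=
    not_isMeagre_of_isOpen (hU.inter (hU.preimage (continuous_const_add (-g)))) ⟨x, hx, hg⟩
  obtain ⟨y, ⟨hyU, hgyU⟩, hyS, hgyS⟩ :=
    (hV.and_eventually ((eventuallyEq_set.mp hSU).and (eventuallyEq_set.mp hshift))).exists
  exact ⟨y, hyS.mpr hyU, -g + y, hgyS.mpr hgyU, by simp [sub_eq_add_neg]⟩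

namespace AddSubgroup.IsComplement

variable {G G' : Type*} [AddGroup G] [AddGroup G'] {S T : Set G}

theorem image (h : IsComplement S T) (e : G ≃+ G') : IsComplement (e '' S) (e '' T) := by
  let eS := Equiv.Set.image e S e.injective
  let eT := Equiv.Set.image e T e.injective
  have : (fun x : (e '' S) × (e '' T) ↦ (x.1 : G') + x.2) ∘ (eS.prodCongr eT) =
      e ∘ (fun x : S × T ↦ (x.1 : G) + x.2) := by
    ext ⟨⟨s, hs⟩, ⟨t, ht⟩⟩
    simp [eS, eT]
  unfold IsComplement
  rw [← Equiv.bijective_comp (eS.prodCongr eT), this]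
  exact e.bijective.comp h

variable {H : AddSubgroup G}

theorem exists_add_mem (h : IsComplement S H) (x : G) : ∃ g ∈ H, x + g ∈ S := by
  obtain ⟨⟨s, hs⟩, hsx, -⟩ := isComplement_iff_existsUnique_neg_add_mem.mp h x
  exact ⟨-(-s + x), H.neg_mem hsx, by simpa⟩

theorem eq_of_neg_add_mem (h : IsComplement S H) {s t : G} (hs : s ∈ S) (ht : t ∈ S)
    (hst : -s + t ∈ H) : s = t := by
  obtain ⟨_, -, huniq⟩ := isComplement_iff_existsUnique_neg_add_mem.mp h t
  have := (huniq ⟨s, hs⟩ hst).trans (huniq ⟨t, ht⟩ (by simp)).symm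
  exact congrArg Subtype.val this

theorem iUnion_preimage_add_eq_univ (h : IsComplement S H) :
    ⋃ g : H, (· + (g : G)) ⁻¹' S = univ :=
  eq_univ_of_forall fun x ↦ by
    obtain ⟨g, hg, hxg⟩ := h.exists_add_mem x
    exact mem_iUnion.mpr ⟨⟨g, hg⟩, hxg⟩

section Group

variable {G : Type*} [AddGroup G] {S : Set G} {H : AddSubgroup G}

theorem not_isMeagre [TopologicalSpace G] [IsTopologicalAddGroup G] [BaireSpace G] [Nonempty G]
    (hH : (H : Set G).Countable) (h : IsComplement S H) : ¬IsMeagre S := fun hS ↦ by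
  have := hH.to_subtype
  refine not_isMeagre_of_isOpen isOpen_univ (univ_nonempty (α := G)) ?_
  rw [← h.iUnion_preimage_add_eq_univ]
  exact isMeagre_iUnion fun g : H ↦
    hS.preimage_of_isOpenMap (continuous_add_const _) (isOpenMap_add_right _)

theorem measure_ne_zero [MeasurableSpace G] [MeasurableAdd G] (μ : Measure G)
    [μ.IsAddRightInvariant] [NeZero μ] (hH : (H : Set G).Countable) (h : IsComplement S H) :
    μ S ≠ 0 := fun hS ↦ by
  have := hH.to_subtype
  refine NeZero.ne μ (Measure.measure_univ_eq_zero.mp ?_)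
  rw [← h.iUnion_preimage_add_eq_univ]
  exact measure_iUnion_null fun g ↦ by rw [measure_preimage_add_right, hS]

end Group

variable {S : Set ℝ} {H : AddSubgroup ℝ}

theorem smul₀ (h : IsComplement S H) {c : ℝ} (hc : c ≠ 0) :
    IsComplement (c • S) (c • H : AddSubgroup ℝ) := by
  rw [AddSubgroup.coe_pointwise_smul, ← image_smul, ← image_smul]
  exact h.image (DistribMulAction.toAddEquiv₀ ℝ c hc)

theorem sub_self_notMem_nhds_zero (hH : Dense (H : Set ℝ)) (h : IsComplement S H) :
    S - S ∉ 𝓝 0 := fun hS ↦ by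
  obtain ⟨ε, hε, hball⟩ := Metric.mem_nhds_iff.mp hS
  obtain ⟨g, hgH, hg0, hgε⟩ := hH.exists_between hε
  obtain ⟨s, hs, t, ht, rfl⟩ :=
    hball (show g ∈ Metric.ball 0 ε by simpa [abs_of_pos hg0] using hgε)
  have := h.eq_of_neg_add_mem ht hs (by rwa [neg_add_eq_sub])
  simp [this] at hg0

theorem not_nullMeasurableSet (hHc : (H : Set ℝ).Countable) (hHd : Dense (H : Set ℝ))
    (h : IsComplement S H) : ¬NullMeasurableSet S := fun hS ↦ by
  obtain ⟨E, hES, hE, hEae⟩ := hS.exists_measurable_subset_ae_eq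
  have hEpos : 0 < volume E := by
    rw [measure_congr hEae]
    exact pos_iff_ne_zero.mpr (h.measure_ne_zero volume hHc)
  exact h.sub_self_notMem_nhds_zero hHd (mem_of_superset
    (Measure.sub_mem_nhds_zero_of_addHaar_pos volume E hE hEpos) (sub_subset_sub hES hES))

theorem not_baireMeasurableSet (hHc : (H : Set ℝ).Countable) (hHd : Dense (H : Set ℝ))
    (h : IsComplement S H) : ¬BaireMeasurableSet S := fun hS ↦
  h.sub_self_notMem_nhds_zero hHd (hS.sub_self_mem_nhds_zero (h.not_isMeagre hHc))

end AddSubgroup.IsComplement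

theorem Dense.exists_add_mem_Icc {H : Set ℝ} (hH : Dense H) (x : ℝ) {a b : ℝ} (hab : a < b) :
    ∃ g ∈ H, x + g ∈ Icc a b := by
  obtain ⟨g, hg, hag, hgb⟩ := hH.exists_between (sub_lt_sub_right hab x)
  exact ⟨g, hg, by linarith, by linarith⟩

theorem Cardinal.mk_eq_continuum_of_Ioo_subset {s : Set ℝ} {a b : ℝ} (hab : a < b)
    (h : Ioo a b ⊆ s) : Cardinal.mk s = Cardinal.continuum :=
  le_antisymm ((mk_set_le s).trans_eq mk_real) (mk_Ioo_real hab ▸ mk_le_mk_of_subset h)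

open Real

theorem Real.two_mul_sin_lt_cos {α : ℝ} (h0 : 0 ≤ α) (h1 : α < 2 / 5) :
    2 * sin α < cos α := by
  nlinarith [sin_le h0, one_sub_sq_div_two_le_cos (x := α)]

theorem Real.cos_le_sin_of_pi_div_four_le {α : ℝ} (h0 : π / 4 ≤ α) (h1 : α ≤ π / 2) :
    cos α ≤ sin α := by
  rw [← sin_pi_div_two_sub]
  exact sin_le_sin_of_le_of_le_pi_div_two (by linarith) h1 (by linarith)

section crossSet

def crossSet (V : Set ℝ) : Set (ℝ × ℝ) :=
  (fun v ↦ (v, 0)) '' V ∪ (fun y ↦ (0, y)) '' Icc (-1) 1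

variable {V : Set ℝ} {α : ℝ}

theorem crossSet_subset_unitDisc (hV : V ⊆ Icc (-1) 1) : crossSet V ⊆ unitDisc := by
  rintro _ (⟨v, hv, rfl⟩ | ⟨y, ⟨hy₁, hy₂⟩, rfl⟩)
  · obtain ⟨hv₁, hv₂⟩ := hV hv
    show v ^ 2 + 0 ^ 2 ≤ 1
    nlinarith
  · show 0 ^ 2 + y ^ 2 ≤ 1
    nlinarith

theorem proj_image_crossSet (hα : 0 ≤ sin α) :
    proj α '' crossSet V = cos α • V ∪ Icc (-sin α) (sin α) := by
  have : (fun y ↦ y * sin α) '' Icc (-1) 1 = Icc (-sin α) (sin α) := by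
    rw [image_mul_right_Icc (by norm_num) hα, neg_one_mul, one_mul]
  rw [crossSet, image_union, image_image, image_image, ← image_smul, ← this]
  simp [proj, mul_comm]

theorem proj_image_crossSet_of_cos_le_sin (hV : V ⊆ Icc 0 1) (h0 : 0 ≤ cos α)
    (h : cos α ≤ sin α) : proj α '' crossSet V = Icc (-sin α) (sin α) := by
  rw [proj_image_crossSet (h0.trans h), union_eq_right]
  rintro _ ⟨v, hv, rfl⟩
  have := hV hv
  constructor <;> simp only [smul_eq_mul] <;> nlinarith [this.1, this.2]

theorem proj_image_crossSet_inter_Ioi (hV : V ⊆ Icc (1 / 2) 1) (h0 : 0 ≤ sin α)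
    (h : 2 * sin α < cos α) : proj α '' crossSet V ∩ Ioi (sin α) = cos α • V := by
  have hI : Icc (-sin α) (sin α) ∩ Ioi (sin α) = ∅ :=
    eq_empty_of_forall_notMem fun x hx ↦ not_lt.mpr hx.1.2 hx.2
  rw [proj_image_crossSet h0, union_inter_distrib_right, hI, union_empty, inter_eq_left]
  rintro _ ⟨v, hv, rfl⟩
  have := hV hv
  simp only [smul_eq_mul, mem_Ioi]
  nlinarith [this.1]

theorem not_lebesgueMeasurable_and_not_hasBaireProperty_proj_image_crossSet
    {H : AddSubgroup ℝ} (hHc : (H : Set ℝ).Countable) (hHd : Dense (H : Set ℝ))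
    (hV : AddSubgroup.IsComplement V H) (hVI : V ⊆ Icc (1 / 2) 1) (h0 : 0 ≤ sin α)
    (h : 2 * sin α < cos α) :
    ¬LebesgueMeasurable (proj α '' crossSet V) ∧
      ¬HasBaireProperty (proj α '' crossSet V) := by
  have hc : cos α ≠ 0 := by linarith
  have hW := hV.smul₀ hc
  have hWc : ((cos α • H : AddSubgroup ℝ) : Set ℝ).Countable := by
    rw [AddSubgroup.coe_pointwise_smul, ← image_smul]
    exact hHc.image _
  have hWd : Dense ((cos α • H : AddSubgroup ℝ) : Set ℝ) := by
    rw [AddSubgroup.coe_pointwise_smul]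
    exact hHd.smul (Units.mk0 _ hc)
  rw [LebesgueMeasurable, hasBaireProperty_iff_baireMeasurableSet]
  refine ⟨fun hm ↦ hW.not_nullMeasurableSet hWc hWd ?_,
    fun hb ↦ hW.not_baireMeasurableSet hWc hWd ?_⟩ <;>
    rw [← proj_image_crossSet_inter_Ioi hVI h0 h]
  · exact hm.inter measurableSet_Ioi.nullMeasurableSet
  · exact hb.inter isOpen_Ioi.baireMeasurableSet

end crossSet

theorem stmt9 :
    ∃ A : Set (ℝ × ℝ), A ⊆ unitDisc ∧
      Cardinal.mk ↥{α ∈ Set.Ico (0 : ℝ) Real.pi |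
          ¬LebesgueMeasurable (proj α '' A) ∧ ¬HasBaireProperty (proj α '' A)} =
        Cardinal.continuum ∧
      Cardinal.mk ↥{α ∈ Set.Ico (0 : ℝ) Real.pi |
          LebesgueMeasurable (proj α '' A) ∧ HasBaireProperty (proj α '' A)} =
        Cardinal.continuum := by
  set H := (Rat.castHom ℝ).toAddMonoidHom.range
  have hHc : (H : Set ℝ).Countable := by simpa [H] using countable_range ((↑) : ℚ → ℝ)
  have hHd : Dense (H : Set ℝ) := by
    rw [AddMonoidHom.coe_range]
    exact Rat.denseRange_cast
  obtain ⟨V, hVI, hV⟩ := H.exists_isComplement_subset fun x ↦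
    hHd.exists_add_mem_Icc x one_half_lt_one
  have hVI' : V ⊆ Icc 0 1 := hVI.trans (Icc_subset_Icc (by norm_num) le_rfl)
  have hπ := pi_gt_three
  refine ⟨crossSet V, crossSet_subset_unitDisc (hVI'.trans (Icc_subset_Icc (by norm_num) le_rfl)),
    ?_, ?_⟩
  · refine Cardinal.mk_eq_continuum_of_Ioo_subset (a := 0) (b := 2 / 5) (by norm_num)
      fun α ⟨hα₀, hα₁⟩ ↦ ⟨⟨hα₀.le, by linarith⟩, ?_⟩
    exact not_lebesgueMeasurable_and_not_hasBaireProperty_proj_image_crossSet hHc hHd hV hVI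
      (sin_nonneg_of_nonneg_of_le_pi hα₀.le (by linarith)) (two_mul_sin_lt_cos hα₀.le hα₁)
  · refine Cardinal.mk_eq_continuum_of_Ioo_subset (a := π / 4) (b := π / 2) (by linarith)
      fun α ⟨hα₀, hα₁⟩ ↦ ⟨⟨by linarith, by linarith⟩, ?_⟩
    rw [LebesgueMeasurable, hasBaireProperty_iff_baireMeasurableSet,
      proj_image_crossSet_of_cos_le_sin hVI' (cos_nonneg_of_mem_Icc ⟨by linarith, hα₁.le⟩)
        (cos_le_sin_of_pi_div_four_le hα₀.le hα₁.le)]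
    exact ⟨measurableSet_Icc.nullMeasurableSet, measurableSet_Icc.baireMeasurableSet⟩
end

section
/- Let n ≥ 2 be an integer and let A be a Lusin set contained in the closed unit ball B(0,1) of the Euclidean space ℝⁿ. Then for every (n-1)-dimensional linear subspace K of ℝⁿ with orthogonal projection π : ℝⁿ → K, the image π[A] is a Lusin set in π[B(0,1)] (the closed unit ball of K): that is, π[A] is uncountable and meets every meager subset of π[B(0,1)] (with its subspace topology) in a countable set. -/
/-- `L` is a Lusin set in a topological space: `L` is uncountable and meets
every meager set in a countable set. -/
def LusinSet {Z : Type*} [TopologicalSpace Z] (L : Set Z) : Prop :=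
  ¬L.Countable ∧ ∀ M : Set Z, IsMeagre M → (L ∩ M).Countable

/-- `L` is a Lusin set in the subspace `Y` (with the subspace topology): `L` is
uncountable and meets every meager subset of `Y` in a countable set. -/
def LusinSetIn {Z : Type*} [TopologicalSpace Z] (Y L : Set Z) : Prop :=
  ¬L.Countable ∧ ∀ M : Set ↥Y, IsMeagre M → (L ∩ Subtype.val '' M).Countable

/-!
A continuous open map pulls meagre sets back to meagre sets. So if `L` is Lusin, then `π[L]`
meets a meagre set `M` only in the image of the countable set `L ∩ π⁻¹[M]`; and since the fibres
of `π` are meagre (`K ≠ 0` has no isolated points), `L` meets each of them countably, so `π[L]`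
cannot be countable. A meagre subset of a subspace is meagre in the whole space, so `π[A]` is then
Lusin in every subspace of `K`, in particular in the projected ball.
-/

open Set Filter Topology

section

variable {X Y : Type*} [TopologicalSpace X] [TopologicalSpace Y]

theorem isMeagre_preimage_singleton [T1Space Y] {f : X → Y} (hc : Continuous f)
    (ho : IsOpenMap f) (y : Y) [NeBot (𝓝[≠] y)] : IsMeagre (f ⁻¹' {y}) :=
  have hy : IsNowhereDense {y} := by
    rw [isClosed_singleton.isNowhereDense_iff, interior_singleton]
  hy.isMeagre.preimage_of_isOpenMap hc ho

theorem LusinSet.image [T1Space Y] [∀ y : Y, NeBot (𝓝[≠] y)] {f : X → Y} (hc : Continuous f)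
    (ho : IsOpenMap f) {L : Set X} (hL : LusinSet L) : LusinSet (f '' L) := by
  refine ⟨fun hcount => hL.1 ?_, fun M hM => ?_⟩
  · have hcover : L ⊆ ⋃ y ∈ f '' L, L ∩ f ⁻¹' {y} := fun x hx =>
      mem_biUnion (mem_image_of_mem f hx) ⟨hx, rfl⟩
    exact (hcount.biUnion fun y _ => hL.2 _ (isMeagre_preimage_singleton hc ho y)).mono hcover
  · rw [← image_inter_preimage]
    exact (hL.2 _ (hM.preimage_of_isOpenMap hc ho)).image f

end

theorem LusinSet.lusinSetIn {Z : Type*} [TopologicalSpace Z] {L : Set Z} (hL : LusinSet L)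
    (Y : Set Z) : LusinSetIn Y L :=
  ⟨hL.1, fun _ hM => hL.2 _ hM.image_val⟩

theorem stmt13_general (n : ℕ) (hn : 2 ≤ n)
    (A : Set (EuclideanSpace ℝ (Fin n)))
    (hALusin : LusinSet A)
    (K : Submodule ℝ (EuclideanSpace ℝ (Fin n)))
    (hK : Module.finrank ℝ K = n - 1) :
    LusinSetIn (⇑(K.orthogonalProjectionOnto) '' Metric.closedBall 0 1)
      (⇑(K.orthogonalProjectionOnto) '' A) := by
  have : Nontrivial K := Module.nontrivial_of_finrank_pos (R := ℝ) (by omega)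
  have hsurj : Function.Surjective K.orthogonalProjectionOnto := fun y =>
    ⟨y, K.orthogonalProjectionOnto_mem_subspace_eq_self y⟩
  exact (hALusin.image K.orthogonalProjectionOnto.continuous
    (K.orthogonalProjectionOnto.isOpenMap hsurj)).lusinSetIn _

theorem stmt13 (n : ℕ) (hn : 2 ≤ n)
    (A : Set (EuclideanSpace ℝ (Fin n)))
    (hAsub : A ⊆ Metric.closedBall 0 1)
    (hALusin : LusinSet A)
    (K : Submodule ℝ (EuclideanSpace ℝ (Fin n)))
    (hK : Module.finrank ℝ K = n - 1) :
    LusinSetIn (⇑(K.orthogonalProjectionOnto) '' Metric.closedBall 0 1)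
      (⇑(K.orthogonalProjectionOnto) '' A) :=
  stmt13_general n hn A hALusin K hK
end

section
/- Let n ≥ 2 be an integer and let A be a Sierpiński set contained in the closed unit ball B(0,1) of the Euclidean space ℝⁿ. Then for every (n-1)-dimensional linear subspace K of ℝⁿ with orthogonal projection π : ℝⁿ → K, the image π[A] is a Sierpiński set in π[B(0,1)] (the closed unit ball of K): that is, π[A] is uncountable and meets every subset of π[B(0,1)] of (n-1)-dimensional Lebesgue measure zero in a countable set. -/
open MeasureTheory

/-- `S` is a Sierpiński set in a measure space: `S` is uncountable and meets
every set of measure zero in a countable set. -/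
def SierpinskiSet {Z : Type*} [MeasureSpace Z] (S : Set Z) : Prop :=
  ¬S.Countable ∧ ∀ N : Set Z, volume N = 0 → (S ∩ N).Countable

/-- `S` is a Sierpiński set in `Y`: `S` is uncountable and meets every subset
of `Y` of measure zero in a countable set. -/
def SierpinskiSetIn {Z : Type*} [MeasureSpace Z] (Y S : Set Z) : Prop :=
  ¬S.Countable ∧ ∀ N : Set Z, N ⊆ Y → volume N = 0 → (S ∩ N).Countable

/-! A surjective linear map pushes Haar measure forward to a (possibly infinite) multiple of
Haar measure, so the projection `π` pulls null sets back to null sets. Hence `A` meets each fibre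
of `π` (a point of `K` is null, as `dim K ≥ 1`) and each preimage of a null set in a countable
set: the first makes `π[A]` uncountable, the second makes `π[A] ∩ N` the image of a countable
set. -/

open Measure

theorem LinearMap.quasiMeasurePreserving_of_surjective {𝕜 E F : Type*}
    [NontriviallyNormedField 𝕜] [CompleteSpace 𝕜]
    [NormedAddCommGroup E] [MeasurableSpace E] [BorelSpace E] [NormedSpace 𝕜 E]
    [LocallyCompactSpace E]
    [NormedAddCommGroup F] [MeasurableSpace F] [BorelSpace F] [NormedSpace 𝕜 F]
    (L : E →ₗ[𝕜] F) (hL : Function.Surjective L)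
    (μ : Measure E) (ν : Measure F) [IsAddHaarMeasure μ] [IsAddHaarMeasure ν] :
    QuasiMeasurePreserving L μ ν := by
  have : FiniteDimensional 𝕜 E := .of_locallyCompactSpace 𝕜
  obtain ⟨c, -, hc⟩ := L.exists_map_addHaar_eq_smul_addHaar μ ν hL
  exact ⟨L.continuous_of_finiteDimensional.measurable, hc ▸ smul_absolutelyContinuous⟩

namespace SierpinskiSet

variable {X Y : Type*} [MeasureSpace X] [MeasureSpace Y] {S : Set X}

theorem sierpinskiSetIn (hS : SierpinskiSet S) (Z : Set X) : SierpinskiSetIn Z S :=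
  ⟨hS.1, fun N _ hN => hS.2 N hN⟩

theorem image [NullSingletonClass (volume : Measure Y)] (hS : SierpinskiSet S) {f : X → Y}
    (hf : QuasiMeasurePreserving f volume volume) : SierpinskiSet (f '' S) := by
  have hnull {N : Set Y} (hN : volume N = 0) : (S ∩ f ⁻¹' N).Countable :=
    hS.2 _ (hf.preimage_null hN)
  refine ⟨fun hc => hS.1 ?_, fun N hN => ?_⟩
  · have hcover : S ⊆ ⋃ y ∈ f '' S, S ∩ f ⁻¹' {y} := fun x hx =>
      Set.mem_biUnion (Set.mem_image_of_mem f hx) ⟨hx, rfl⟩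
    exact (hc.biUnion fun y _ => hnull (measure_singleton y)).mono hcover
  · refine ((hnull hN).image f).mono ?_
    rintro _ ⟨⟨x, hx, rfl⟩, hxN⟩
    exact ⟨x, ⟨hx, hxN⟩, rfl⟩

end SierpinskiSet

theorem stmt14_general (n : ℕ) (hn : 2 ≤ n)
    (A : Set (EuclideanSpace ℝ (Fin n)))
    (hASierp : SierpinskiSet A)
    (K : Submodule ℝ (EuclideanSpace ℝ (Fin n)))
    (hK : Module.finrank ℝ K = n - 1) :
    SierpinskiSetIn (⇑(K.orthogonalProjectionOnto) '' Metric.closedBall 0 1)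
      (⇑(K.orthogonalProjectionOnto) '' A) := by
  have : Nontrivial K := Module.finrank_pos_iff.mp (show 0 < Module.finrank ℝ K by omega)
  have hsurj : Function.Surjective K.orthogonalProjectionOnto := fun v =>
    ⟨v, K.orthogonalProjectionOnto_mem_subspace_eq_self v⟩
  have hqmp : QuasiMeasurePreserving K.orthogonalProjectionOnto volume volume :=
    K.orthogonalProjectionOnto.toLinearMap.quasiMeasurePreserving_of_surjective hsurj _ _
  exact (hASierp.image hqmp).sierpinskiSetIn _

theorem stmt14 (n : ℕ) (hn : 2 ≤ n)
    (A : Set (EuclideanSpace ℝ (Fin n)))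
    (hAsub : A ⊆ Metric.closedBall 0 1)
    (hASierp : SierpinskiSet A)
    (K : Submodule ℝ (EuclideanSpace ℝ (Fin n)))
    (hK : Module.finrank ℝ K = n - 1) :
    SierpinskiSetIn (⇑(K.orthogonalProjectionOnto) '' Metric.closedBall 0 1)
      (⇑(K.orthogonalProjectionOnto) '' A) :=
  stmt14_general n hn A hASierp K hK
end

section
/- Let X be a compact Polish space, let H(X) be the space of homeomorphisms of X onto itself with the compact-open topology, let G ⊆ H(X) be an uncountable G_δ subset of H(X), and let B ⊆ X be comeager in X. Then there exist a dense G_δ set W ⊆ X and a perfect set Q ⊆ G (perfect as a subset of the space H(X)) such that for every homeomorphism f ∈ Q one has W ⊆ f[B]. -/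
/-- The space of homeomorphisms of a compact Hausdorff space `X` onto itself:
the bijective continuous self-maps of `X`, as a subspace of `C(X, X)` with the
compact-open topology. -/
abbrev HomeoSpace (X : Type*) [TopologicalSpace X] : Type _ :=
  {f : C(X, X) // Function.Bijective ⇑f}

/-!
Pairing each homeomorphism with its inverse identifies `HomeoSpace X` with a closed, hence Polish,
subset of `C(X, X) × C(X, X)`, on which `f ↦ f⁻¹` is continuous. Choose a dense Gδ set `B' ⊆ B`;
the relation `R = {(x, f) | f⁻¹ x ∈ B'}` is Gδ and its sections `{x | (x, f) ∈ R} = f '' B'` are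
dense. As `G` is an uncountable Gδ set, it contains a Cantor set, so it suffices to treat a Gδ
relation with dense sections over a perfect Polish space. Take a countable dense set `S` of `f`s;
by Baire the `x` lying in all sections over `S` form a dense set, containing a countable dense `T`.
The `f` with `T × {f} ⊆ R` form a dense Gδ set, which is uncountable and so contains a Cantor set
`Q`. By compactness of `Q` the set `W = {x | {x} × Q ⊆ R}` is Gδ, and it contains `T`, so it is
dense.
-/

open Set Function Filter Topology TopologicalSpace

theorem IsGδ.polishSpace {Y : Type*} [TopologicalSpace Y] [PolishSpace Y] {s : Set Y}
    (hs : IsGδ s) : PolishSpace s := by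
  -- `⋂ n, O n` is the closed diagonal of the product of the Polish spaces `O n`.
  obtain ⟨O, hO, rfl⟩ := hs.eq_iInter_nat
  have : ∀ n, PolishSpace (O n) := fun n => (hO n).polishSpace
  let e : (⋂ n, O n : Set Y) → ∀ n, O n := fun y n => ⟨y, mem_iInter.1 y.2 n⟩
  have he : Continuous e := continuous_pi fun n => continuous_subtype_val.subtype_mk _
  have hrange : range e = {f | ∀ n, (f n : Y) = f 0} := by
    ext f
    refine ⟨?_, fun hf => ⟨⟨f 0, mem_iInter.2 fun n => hf n ▸ (f n).2⟩, ?_⟩⟩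
    · rintro ⟨y, rfl⟩ n
      rfl
    · exact funext fun n => Subtype.ext (hf n).symm
  refine IsClosedEmbedding.polishSpace (f := e) ⟨?_, ?_⟩
  · exact IsEmbedding.of_comp he (continuous_subtype_val.comp (continuous_apply 0))
      IsEmbedding.subtypeVal
  · rw [hrange, ofPred_forall]
    exact isClosed_iInter fun n => isClosed_eq (continuous_subtype_val.comp (continuous_apply n))
      (continuous_subtype_val.comp (continuous_apply 0))

theorem IsGδ.not_countable_of_dense {Y : Type*} [TopologicalSpace Y] [T1Space Y] [BaireSpace Y]
    [PerfectSpace Y] [Nonempty Y] {s : Set Y} (hs : IsGδ s) (hd : Dense s) : ¬s.Countable := by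
  intro hc
  have hres : s ∩ ⋂ y ∈ s, {y}ᶜ ∈ residual Y :=
    inter_mem (residual_of_dense_Gδ hs hd) <| (countable_bInter_mem hc).2 fun y _ =>
      residual_of_dense_open isOpen_compl_singleton (dense_compl_singleton y)
  obtain ⟨y, hy, hy'⟩ := (dense_of_mem_residual hres).nonempty
  exact mem_iInter₂.1 hy' y hy rfl

theorem IsGδ.exists_nat_bool_injection_of_not_countable {Y : Type*} [TopologicalSpace Y]
    [PolishSpace Y] {s : Set Y} (hs : IsGδ s) (hunc : ¬s.Countable) :
    ∃ f : (ℕ → Bool) → Y, range f ⊆ s ∧ Continuous f ∧ Injective f := by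
  have := hs.polishSpace
  obtain ⟨f, -, hf, hinj⟩ := isClosed_univ.exists_nat_bool_injection_of_not_countable (α := s)
    (by rwa [countable_univ_iff, countable_coe_iff])
  exact ⟨(↑) ∘ f, by rintro _ ⟨σ, rfl⟩; exact (f σ).2, continuous_subtype_val.comp hf,
    Subtype.val_injective.comp hinj⟩

instance : PerfectSpace (ℕ → Bool) := by
  refine perfectSpace_iff_forall_not_isolated.2 fun σ => ?_
  rw [← mem_closure_iff_nhdsWithin_neBot]
  refine mem_closure_of_tendsto (f := fun n => update σ n (!σ n)) (b := atTop) ?_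
    (Eventually.of_forall fun n h => by simpa using congrFun h n)
  refine tendsto_pi_nhds.2 fun i => tendsto_const_nhds.congr' ?_
  filter_upwards [eventually_gt_atTop i] with n hn
  exact (update_of_ne hn.ne _ _).symm

theorem Continuous.perfect_range_of_injective {α β : Type*} [TopologicalSpace α]
    [CompactSpace α] [PerfectSpace α] [TopologicalSpace β] [T2Space β] {f : α → β}
    (hf : Continuous f) (hinj : Injective f) : Perfect (range f) := by
  refine ⟨(isCompact_range hf).isClosed, preperfect_iff_nhds.2 ?_⟩
  rintro _ ⟨x, rfl⟩ U hU
  obtain ⟨x', ⟨hx'U, -⟩, hx'⟩ := preperfect_iff_nhds.1 PerfectSpace.univ_preperfect x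
    (mem_univ x) _ (hf.continuousAt hU)
  exact ⟨f x', ⟨hx'U, mem_range_self x'⟩, hinj.ne hx'⟩

theorem IsCompact.isGδ_setOf_forall_mem {X Y : Type*} [TopologicalSpace X] [TopologicalSpace Y]
    {K : Set Y} (hK : IsCompact K) {R : Set (X × Y)} (hR : IsGδ R) :
    IsGδ {x | ∀ y ∈ K, (x, y) ∈ R} := by
  obtain ⟨T, hTo, hTc, rfl⟩ := hR
  have hsplit : {x | ∀ y ∈ K, (x, y) ∈ ⋂₀ T} = ⋂ U ∈ T, {x | ∀ y ∈ K, (x, y) ∈ U} := by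
    ext x
    simp only [mem_sInter, mem_iInter]
    exact forall₂_comm
  rw [hsplit]
  exact IsGδ.biInter_of_isOpen hTc fun U hU => isOpen_iff_mem_nhds.2 fun x hx =>
    hK.eventually_forall_of_forall_eventually fun y hy => (hTo U hU).mem_nhds (hx y hy)

theorem exists_dense_isGδ_prod_nat_bool_subset {X Y : Type*} [TopologicalSpace X]
    [SecondCountableTopology X] [BaireSpace X] [TopologicalSpace Y] [PolishSpace Y]
    [PerfectSpace Y] [Nonempty Y] {R : Set (X × Y)} (hR : IsGδ R)
    (hsec : ∀ y, Dense {x | (x, y) ∈ R}) :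
    ∃ W : Set X, Dense W ∧ IsGδ W ∧
      ∃ φ : (ℕ → Bool) → Y, Continuous φ ∧ Injective φ ∧ W ×ˢ range φ ⊆ R := by
  obtain ⟨S, hSc, hSd⟩ := exists_countable_dense Y
  have hE : Dense (⋂ y ∈ S, {x | (x, y) ∈ R}) :=
    dense_biInter_of_Gδ (fun y _ => hR.preimage (by fun_prop)) hSc fun y _ => hsec y
  obtain ⟨T, hTE, hTc, hTd⟩ := hE.exists_countable_dense_subset
  have hY'Gδ : IsGδ (⋂ x ∈ T, {y | (x, y) ∈ R}) :=
    IsGδ.biInter hTc fun x _ => hR.preimage (by fun_prop)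
  have hY'd : Dense (⋂ x ∈ T, {y | (x, y) ∈ R}) :=
    hSd.mono fun y hy => mem_iInter₂.2 fun x hx => mem_iInter₂.1 (hTE hx) y hy
  obtain ⟨φ, hφY', hφ, hφinj⟩ :=
    hY'Gδ.exists_nat_bool_injection_of_not_countable (hY'Gδ.not_countable_of_dense hY'd)
  refine ⟨{x | ∀ y ∈ range φ, (x, y) ∈ R},
    hTd.mono fun x hx y hy => mem_iInter₂.1 (hφY' hy) x hx,
    (isCompact_range hφ).isGδ_setOf_forall_mem hR, φ, hφ, hφinj, fun q hq => hq.1 q.2 hq.2⟩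

theorem exists_dense_isGδ_prod_nat_bool_subset_of_not_countable {X Y : Type*}
    [TopologicalSpace X] [SecondCountableTopology X] [BaireSpace X] [TopologicalSpace Y]
    [PolishSpace Y] {s : Set Y} (hs : IsGδ s) (hunc : ¬s.Countable) {R : Set (X × Y)}
    (hR : IsGδ R) (hsec : ∀ y ∈ s, Dense {x | (x, y) ∈ R}) :
    ∃ W : Set X, Dense W ∧ IsGδ W ∧ ∃ φ : (ℕ → Bool) → Y,
      Continuous φ ∧ Injective φ ∧ range φ ⊆ s ∧ W ×ˢ range φ ⊆ R := by
  obtain ⟨c, hcs, hc, hcinj⟩ := hs.exists_nat_bool_injection_of_not_countable hunc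
  have : PolishSpace (ℕ → Bool) := {}
  obtain ⟨W, hWd, hWGδ, φ, hφ, hφinj, hWφ⟩ := exists_dense_isGδ_prod_nat_bool_subset
    (R := Prod.map id c ⁻¹' R) (hR.preimage (by fun_prop)) fun σ => hsec _ (hcs ⟨σ, rfl⟩)
  refine ⟨W, hWd, hWGδ, c ∘ φ, hc.comp hφ, hcinj.comp hφinj,
    (range_comp_subset_range _ _).trans hcs, ?_⟩
  rintro ⟨x, _⟩ ⟨hx, σ, rfl⟩
  exact hWφ (mk_mem_prod hx (mem_range_self σ))

theorem ContinuousMap.polishSpace {X Z : Type*} [TopologicalSpace X] [CompactSpace X]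
    [PolishSpace X] [TopologicalSpace Z] [PolishSpace Z] : PolishSpace C(X, Z) := by
  let := upgradeIsCompletelyMetrizable X
  let := upgradeIsCompletelyMetrizable Z
  infer_instance

def homeoPairs (X : Type*) [TopologicalSpace X] : Set (C(X, X) × C(X, X)) :=
  {p | p.1.comp p.2 = ContinuousMap.id X ∧ p.2.comp p.1 = ContinuousMap.id X}

namespace homeoPairs

variable {X : Type*} [TopologicalSpace X]

theorem apply_inv (p : homeoPairs X) (x : X) : p.1.1 (p.1.2 x) = x :=
  DFunLike.congr_fun p.2.1 x

theorem inv_apply (p : homeoPairs X) (x : X) : p.1.2 (p.1.1 x) = x :=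
  DFunLike.congr_fun p.2.2 x

theorem isClosed [T2Space X] [LocallyCompactSpace X] : IsClosed (homeoPairs X) :=
  (isClosed_eq (ContinuousMap.continuous_comp'.comp continuous_swap) continuous_const).inter
    (isClosed_eq ContinuousMap.continuous_comp' continuous_const)

def toHomeoSpace (p : homeoPairs X) : HomeoSpace X :=
  ⟨p.1.1, bijective_iff_has_inverse.2 ⟨p.1.2, inv_apply p, apply_inv p⟩⟩

theorem continuous_toHomeoSpace : Continuous (toHomeoSpace (X := X)) :=
  (continuous_fst.comp continuous_subtype_val).subtype_mk _

theorem toHomeoSpace_injective : Injective (toHomeoSpace (X := X)) := by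
  intro p q hpq
  have h1 : p.1.1 = q.1.1 := congrArg Subtype.val hpq
  refine Subtype.ext (Prod.ext h1 (ContinuousMap.ext fun x => ?_))
  calc p.1.2 x = p.1.2 (q.1.1 (q.1.2 x)) := by rw [apply_inv]
    _ = q.1.2 x := by rw [← h1, inv_apply]

theorem toHomeoSpace_surjective [CompactSpace X] [T2Space X] :
    Surjective (toHomeoSpace (X := X)) := by
  intro f
  let e : X ≃ₜ X := f.1.continuous.homeoOfEquivCompactToT2 (f := Equiv.ofBijective f.1 f.2)
  exact ⟨⟨(f.1, ⟨e.symm, e.symm.continuous⟩),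
    ContinuousMap.ext e.apply_symm_apply, ContinuousMap.ext e.symm_apply_apply⟩, rfl⟩

theorem dense_preimage_inv (p : homeoPairs X) {D : Set X} (hD : Dense D) :
    Dense (p.1.2 ⁻¹' D) := by
  rw [← image_eq_preimage_of_inverse (inv_apply p) (apply_inv p)]
  exact (RightInverse.surjective (apply_inv p)).denseRange.dense_image p.1.1.continuous hD

end homeoPairs

theorem stmt15 {X : Type} [TopologicalSpace X] [PolishSpace X] [CompactSpace X]
    (G : Set (HomeoSpace X)) (hGunc : ¬G.Countable) (hGδ : IsGδ G)
    (B : Set X) (hB : IsMeagre Bᶜ) :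
    ∃ W : Set X, Dense W ∧ IsGδ W ∧
      ∃ Q : Set (HomeoSpace X), Q ⊆ G ∧ PerfectSet Q ∧
        ∀ f ∈ Q, W ⊆ ⇑f.1 '' B := by
  have : PolishSpace C(X, X) := ContinuousMap.polishSpace
  have : PolishSpace (homeoPairs X) := homeoPairs.isClosed.polishSpace
  obtain ⟨B', hB'B, hB'Gδ, hB'd⟩ := mem_residual.1 (by simpa [IsMeagre] using hB)
  have hunc : ¬(homeoPairs.toHomeoSpace ⁻¹' G).Countable := fun h =>
    hGunc (image_preimage_eq G homeoPairs.toHomeoSpace_surjective ▸ h.image _)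
  obtain ⟨W, hWd, hWGδ, φ, hφ, hφinj, hφG, hWR⟩ :=
    exists_dense_isGδ_prod_nat_bool_subset_of_not_countable
      (hGδ.preimage homeoPairs.continuous_toHomeoSpace) hunc
      (R := {q : X × homeoPairs X | q.2.1.2 q.1 ∈ B'}) (hB'Gδ.preimage (by fun_prop))
      fun p _ => homeoPairs.dense_preimage_inv p hB'd
  refine ⟨W, hWd, hWGδ, range (homeoPairs.toHomeoSpace ∘ φ), ?_, ⟨?_, range_nonempty _⟩, ?_⟩
  · rintro _ ⟨σ, rfl⟩
    exact hφG ⟨σ, rfl⟩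
  · exact (homeoPairs.continuous_toHomeoSpace.comp hφ).perfect_range_of_injective
      (homeoPairs.toHomeoSpace_injective.comp hφinj)
  · rintro _ ⟨σ, rfl⟩ x hx
    exact ⟨_, hB'B (hWR (mk_mem_prod hx (mem_range_self σ))), homeoPairs.apply_inv (φ σ) x⟩
end
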